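/- arXiv:2505.17725 — 2 statements merged into one kernel-verified Lean document; each statement's English description precedes it below -/
import Mathlib

section
/- Let σ, τ be weight functions in the class W₀ with associated weight matrices {S^(ℓ) : ℓ > 0} and {T^(ℓ) : ℓ > 0}, and consider the assertions: (i) σ(t) = o(τ(t)) as t → +∞; (ii) ω_{S^(j₀)}(t) = o(ω_{T^(ℓ₀)}(t)) as t → +∞ for some ℓ₀, j₀ > 0; (iii) ω_{S^(j)}(t) = o(ω_{T^(ℓ)}(t)) as t → +∞ for all ℓ, j > 0; (iv) σ⋆̂τ is well-defined; (v) T^(j₀) ◁ S^(ℓ₀) for some ℓ₀, j₀ > 0; (vi) T^(j) ◁ S^(ℓ) for all ℓ, j > 0. Then: (i) ⟺ (ii) ⟺ (iii); (vi) implies (i) and (v); if σ or τ satisfies (ω₁), then (i) ⟹ (iv), (ii) ⟹ (v), and (iii) ⟹ (vi); if σ or τ satisfies (ω₆), then (vi) ⟹ (iii), (v) ⟹ (ii), and (iv) ⟹ (i). In particular, if σ or τ satisfies (ω₁) and σ or τ satisfies (ω₆), then all six assertions are equivalent. -/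
open Real Filter Asymptotics Set
open scoped ENNReal Topology

noncomputable section

/-- A weight function: nonnegative, non-decreasing on `[0,∞)`, tending to `+∞`. -/
def IsWeightFct (ω : ℝ → ℝ) : Prop :=
  (∀ t : ℝ, 0 ≤ ω t) ∧ MonotoneOn ω (Ici (0:ℝ)) ∧ Tendsto ω atTop atTop

/-- Condition `(ω₁)`: `ω(2t) = O(ω(t))`. -/
def HasOm1 (ω : ℝ → ℝ) : Prop :=
  ∃ L : ℝ, 1 ≤ L ∧ ∀ t : ℝ, 0 ≤ t → ω (2 * t) ≤ L * (ω t + 1)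

/-- Condition `(ω₆)`. -/
def HasOm6 (ω : ℝ → ℝ) : Prop :=
  ∃ H : ℝ, 1 ≤ H ∧ ∀ t : ℝ, 0 ≤ t → 2 * ω t ≤ ω (H * t) + H

/-- The class `W₀` of (normalized) Braun-Meise-Taylor weight functions. -/
def IsW0 (ω : ℝ → ℝ) : Prop :=
  IsWeightFct ω ∧ ContinuousOn ω (Ici (0:ℝ)) ∧ (∀ t ∈ Icc (0:ℝ) 1, ω t = 0) ∧
    ((fun t : ℝ => Real.log t) =o[atTop] ω) ∧
    ConvexOn ℝ univ (fun y : ℝ => ω (Real.exp y))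

/-- Legendre-Fenchel-Young conjugate `φ*_ω`. -/
def phiStar (ω : ℝ → ℝ) (x : ℝ) : ℝ :=
  sSup {z : ℝ | ∃ y : ℝ, 0 ≤ y ∧ z = x * y - ω (Real.exp y)}

/-- The sequence `W^(ℓ)` of the associated weight matrix of `ω`. -/
def assocSeq (ω : ℝ → ℝ) (ℓ : ℝ) (p : ℕ) : ℝ :=
  Real.exp ((1 / ℓ) * phiStar ω (ℓ * (p : ℝ)))

/-- The weight function `ω_M` associated with a sequence `M`. -/
def omegaSeq (M : ℕ → ℝ) (t : ℝ) : ℝ :=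
  sSup {z : ℝ | ∃ p : ℕ, z = Real.log (t ^ p / M p)}

/-- Property `(P_{ω,γ})`. -/
def gammaProp (ω : ℝ → ℝ) (g : ℝ) : Prop :=
  ∃ K : ℝ, 1 < K ∧
    limsup (fun t : ℝ => ((ω (K ^ g * t) / ω t : ℝ) : EReal)) atTop < (K : EReal)

/-- Property `(P̄_{ω,γ})`. -/
def gammaBarProp (ω : ℝ → ℝ) (g : ℝ) : Prop :=
  ∃ A : ℝ, 1 < A ∧
    (A : EReal) < liminf (fun t : ℝ => ((ω (A ^ g * t) / ω t : ℝ) : EReal)) atTop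

/-- The growth index `γ(ω) ∈ [0,∞]`. -/
def gammaIdx (ω : ℝ → ℝ) : ℝ≥0∞ :=
  ⨆ (g : ℝ) (_ : 0 < g ∧ gammaProp ω g), ENNReal.ofReal g

/-- The growth index `γ̄(ω) ∈ [0,∞]` (`+∞` if no admissible `γ` exists). -/
def gammaBarIdx (ω : ℝ → ℝ) : ℝ≥0∞ :=
  sInf (ENNReal.ofReal '' {g : ℝ | 0 < g ∧ gammaBarProp ω g})

/-- Generalized lower Legendre conjugate `σ ⋆̌ τ`. -/
def lowerConj (σ τ : ℝ → ℝ) (t : ℝ) : ℝ :=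
  sInf {z : ℝ | ∃ s : ℝ, 0 < s ∧ z = σ s + τ (t / s)}

/-- Generalized upper Legendre conjugate `σ ⋆̂ τ`. -/
def upperConj (σ τ : ℝ → ℝ) (t : ℝ) : ℝ :=
  if t = 0 then σ 0 - τ 0 else sSup {z : ℝ | ∃ s : ℝ, 0 ≤ s ∧ z = σ s - τ (s / t)}

/-- `σ ⋆̂ τ` is well-defined, i.e. `σ⋆̂τ(t) < +∞` for every `t`. -/
def UpperConjWD (σ τ : ℝ → ℝ) : Prop :=
  ∀ t : ℝ, 0 < t → BddAbove {z : ℝ | ∃ s : ℝ, 0 ≤ s ∧ z = σ s - τ (s / t)}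

/-- Lower Legendre envelope `h_⋆`. -/
def lowerEnv (h : ℝ → ℝ) (t : ℝ) : ℝ :=
  sInf {z : ℝ | ∃ u : ℝ, 0 < u ∧ z = h u + t * u}

/-- Upper Legendre envelope `h^⋆`. -/
def upperEnv (h : ℝ → ℝ) (t : ℝ) : ℝ :=
  sSup {z : ℝ | ∃ s : ℝ, 0 ≤ s ∧ z = h s - t * s}

/-- `(((ω^ι)^α)_⋆)^{1/α}` (which equals `ω ⋆̌ id^{1/α}`). -/
def lowerCompose (ω : ℝ → ℝ) (α : ℝ) (t : ℝ) : ℝ :=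
  lowerEnv (fun u : ℝ => ω (1 / u ^ α)) (t ^ (1 / α))

/-- `(((ω^α)^⋆)^ι)^{1/α}` (which equals `ω ⋆̂ id^{1/α}`). -/
def upperCompose (ω : ℝ → ℝ) (α : ℝ) (t : ℝ) : ℝ :=
  upperEnv (fun s : ℝ => ω (s ^ α)) (1 / t ^ (1 / α))

/-- Equivalence `σ ∼ τ` of weight functions. -/
def WeightEquiv (σ τ : ℝ → ℝ) : Prop :=
  σ =O[atTop] τ ∧ τ =O[atTop] σ

/-- Relation `M ≼ N` for sequences: `sup_{p ≥ 1} (M_p/N_p)^{1/p} < ∞`. -/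
def seqPrec (M N : ℕ → ℝ) : Prop :=
  ∃ C : ℝ, ∀ p : ℕ, 1 ≤ p → (M p / N p) ^ (1 / (p : ℝ)) ≤ C

/-- Relation `M ◁ N` for sequences: `(M_p/N_p)^{1/p} → 0`. -/
def seqTriangle (M N : ℕ → ℝ) : Prop :=
  Tendsto (fun p : ℕ => (M p / N p) ^ (1 / (p : ℝ))) atTop (𝓝 0)

/-- Equivalence `M ≈ N` of sequences. -/
def seqEquiv (M N : ℕ → ℝ) : Prop := seqPrec M N ∧ seqPrec N M

/-- The Gevrey sequence `G^α`. -/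
def gevrey (α : ℝ) (p : ℕ) : ℝ := (p.factorial : ℝ) ^ α

/-- The quotient sequence `μ_p = M_p / M_{p-1}`, `μ₀ = 1`. -/
def quotSeq (M : ℕ → ℝ) : ℕ → ℝ
  | 0 => 1
  | (p + 1) => M (p + 1) / M p

/-- Condition `(β,Q)`: `liminf_{p} μ_{Qp}/μ_p > Q^β`. -/
def condBQ (M : ℕ → ℝ) (β : ℝ) (Q : ℕ) : Prop :=
  ((((Q : ℝ) ^ β : ℝ)) : EReal) <
    liminf (fun p : ℕ => ((quotSeq M (Q * p) / quotSeq M p : ℝ) : EReal)) atTop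

/-- Thilliez's growth index `γ(M) ∈ [0,∞]`. -/
def thilliezIdx (M : ℕ → ℝ) : ℝ≥0∞ :=
  ⨆ (β : ℝ) (_ : 0 ≤ β ∧ ∃ Q : ℕ, 2 ≤ Q ∧ condBQ M β Q), ENNReal.ofReal β

/-- The Beurling Gelfand-Shilov space `S_(σ)(ℝ)` (membership predicate). -/
def MemSBeurling (σ : ℝ → ℝ) (f : ℝ → ℂ) : Prop :=
  ContDiff ℝ (⊤ : ℕ∞) f ∧ ∀ ℓ : ℝ, 0 < ℓ → ∃ C : ℝ, ∀ x : ℝ, ∀ j k : ℕ,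
    (1 + |x|) ^ k * ‖iteratedDeriv j f x‖ ≤ C * assocSeq σ ℓ (j + k)

/-- The polynomial `ψ(x) = x² + 1/4`. -/
def psiMap (x : ℝ) : ℝ := x ^ 2 + 1 / 4

/-- The resolvent operator `R_μ = ∑_m C_{ψ_m}/μ^{m+1}`. -/
def Rres (μ : ℂ) (f : ℝ → ℂ) (x : ℝ) : ℂ :=
  ∑' m : ℕ, (μ ^ (m + 1))⁻¹ * f (psiMap^[m] x)

section Aux

/-- Subgradient existence for a convex monotone function on ℝ. -/
lemma sg_exists (h : ℝ → ℝ) (hc : ConvexOn ℝ univ h) (hm : Monotone h) (y : ℝ) :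
    ∃ x : ℝ, 0 ≤ x ∧ ∀ y' : ℝ, h y + x * (y' - y) ≤ h y' := by
  set A : Set ℝ := {s : ℝ | ∃ b : ℝ, b < y ∧ s = (h y - h b) / (y - b)} with hA
  have hmemA : ∀ b, b < y → (h y - h b) / (y - b) ∈ A := fun b hb => ⟨b, hb, rfl⟩
  have hne : A.Nonempty := ⟨_, hmemA (y - 1) (by linarith)⟩
  have hslope : ∀ b, b < y → ∀ c, y < c →
      (h y - h b) / (y - b) ≤ (h c - h y) / (c - y) := fun b hb c hc' =>
    hc.slope_mono_adjacent (mem_univ b) (mem_univ c) hb hc'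
  have hbdd : BddAbove A := by
    refine ⟨(h (y + 1) - h y) / (y + 1 - y), ?_⟩
    rintro s ⟨b, hb, rfl⟩
    exact hslope b hb (y + 1) (by linarith)
  set x := sSup A with hx
  have hxge : ∀ b, b < y → (h y - h b) / (y - b) ≤ x := fun b hb =>
    le_csSup hbdd (hmemA b hb)
  have hxle : ∀ c, y < c → x ≤ (h c - h y) / (c - y) := fun c hc' =>
    csSup_le hne (by rintro s ⟨b, hb, rfl⟩; exact hslope b hb c hc')
  have hx0 : 0 ≤ x := by
    have h1 : (h y - h (y - 1)) / (y - (y - 1)) ≤ x := hxge (y - 1) (by linarith)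
    have h2 : 0 ≤ h y - h (y - 1) := by
      have := hm (show y - 1 ≤ y by linarith); linarith
    have : y - (y - 1) = 1 := by ring
    rw [this, div_one] at h1
    linarith
  refine ⟨x, hx0, fun y' => ?_⟩
  rcases lt_trichotomy y' y with hlt | heq | hgt
  · have := hxge y' hlt
    have hpos : 0 < y - y' := by linarith
    rw [div_le_iff₀ hpos] at this
    nlinarith
  · subst heq; simp
  · have := hxle y' hgt
    have hpos : 0 < y' - y := by linarith
    rw [le_div_iff₀ hpos] at this
    nlinarith

lemma IsW0.nonneg {ω : ℝ → ℝ} (hω : IsW0 ω) : ∀ t, 0 ≤ ω t := hω.1.1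

lemma IsW0.mono {ω : ℝ → ℝ} (hω : IsW0 ω) : MonotoneOn ω (Ici (0:ℝ)) := hω.1.2.1

lemma IsW0.tendsto {ω : ℝ → ℝ} (hω : IsW0 ω) : Tendsto ω atTop atTop := hω.1.2.2

lemma IsW0.one_eq {ω : ℝ → ℝ} (hω : IsW0 ω) : ω 1 = 0 := hω.2.2.1 1 ⟨zero_le_one, le_refl 1⟩

lemma IsW0.logo {ω : ℝ → ℝ} (hω : IsW0 ω) : (fun t : ℝ => Real.log t) =o[atTop] ω :=
  hω.2.2.2.1

lemma IsW0.convex {ω : ℝ → ℝ} (hω : IsW0 ω) :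
    ConvexOn ℝ univ (fun y : ℝ => ω (Real.exp y)) := hω.2.2.2.2

lemma IsW0.expMono {ω : ℝ → ℝ} (hω : IsW0 ω) : Monotone (fun y : ℝ => ω (Real.exp y)) :=
  fun y₁ y₂ h12 => hω.mono (le_of_lt (exp_pos y₁)) (le_of_lt (exp_pos y₂)) (exp_le_exp.2 h12)

/-- From `log = o(ω)`: for any `c > 0` there is `Y ≥ 0` with `c * y ≤ ω (exp y)` for `y ≥ Y`. -/
lemma IsW0.log_bound {ω : ℝ → ℝ} (hω : IsW0 ω) {c : ℝ} (hc : 0 < c) :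
    ∃ Y : ℝ, 0 ≤ Y ∧ ∀ y : ℝ, Y ≤ y → c * y ≤ ω (Real.exp y) := by
  have h1 := (isLittleO_iff.1 hω.logo) (show (0:ℝ) < 1 / c by positivity)
  rw [eventually_atTop] at h1
  obtain ⟨T, hT⟩ := h1
  refine ⟨max 0 (Real.log (max T 1) + 1), le_max_left _ _, fun y hy => ?_⟩
  have hy0 : 0 ≤ y := le_trans (le_max_left _ _) hy
  have hTy : max T 1 ≤ Real.exp y := by
    have h2 : Real.log (max T 1) + 1 ≤ y := le_trans (le_max_right _ _) hy
    have h3 : max T 1 ≤ Real.exp (Real.log (max T 1) + 1) := by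
      rw [Real.exp_add]
      have := Real.exp_log (show (0:ℝ) < max T 1 by positivity)
      nlinarith [Real.exp_pos (Real.log (max T 1)), Real.exp_one_gt_d9, this]
    exact le_trans h3 (Real.exp_le_exp.2 h2)
  have := hT (Real.exp y) (le_trans (le_max_left _ _) hTy)
  rw [Real.norm_eq_abs, Real.norm_eq_abs, Real.log_exp] at this
  have habs : |y| = y := abs_of_nonneg hy0
  rw [habs] at this
  have hωnn : |ω (Real.exp y)| = ω (Real.exp y) := abs_of_nonneg (hω.nonneg _)
  rw [hωnn] at this
  calc c * y ≤ c * ((1/c) * ω (Real.exp y)) := by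
        exact mul_le_mul_of_nonneg_left this (le_of_lt hc)
    _ = ω (Real.exp y) := by field_simp

end Aux
section Aux2

def phiSet (ω : ℝ → ℝ) (x : ℝ) : Set ℝ := {z : ℝ | ∃ y : ℝ, 0 ≤ y ∧ z = x * y - ω (Real.exp y)}

lemma phiStar_eq (ω : ℝ → ℝ) (x : ℝ) : phiStar ω x = sSup (phiSet ω x) := rfl

lemma phiSet_nonempty (ω : ℝ → ℝ) (x : ℝ) : (phiSet ω x).Nonempty :=
  ⟨x * 0 - ω (Real.exp 0), 0, le_refl 0, rfl⟩

lemma phiStar_bddAbove {ω : ℝ → ℝ} (hω : IsW0 ω) {x : ℝ} (hx : 0 ≤ x) :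
    BddAbove (phiSet ω x) := by
  obtain ⟨Y, hY0, hY⟩ := hω.log_bound (show (0:ℝ) < x + 1 by linarith)
  refine ⟨max 0 (x * Y), ?_⟩
  rintro z ⟨y, hy, rfl⟩
  rcases le_or_gt y Y with h | h
  · have : x * y ≤ x * Y := mul_le_mul_of_nonneg_left h hx
    have := hω.nonneg (Real.exp y)
    have : x * y - ω (Real.exp y) ≤ x * Y := by linarith
    exact le_trans this (le_max_right _ _)
  · have h1 := hY y (le_of_lt h)
    have : x * y - ω (Real.exp y) ≤ x * y - (x + 1) * y := by linarith
    have h2 : x * y - (x + 1) * y = -y := by ring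
    have hy0 : 0 ≤ y := le_trans hY0 (le_of_lt h)
    refine le_trans this ?_
    rw [h2]
    exact le_trans (by linarith) (le_max_left 0 (x * Y))

lemma phiStar_ge {ω : ℝ → ℝ} (hω : IsW0 ω) {x : ℝ} (hx : 0 ≤ x) {y : ℝ} (hy : 0 ≤ y) :
    x * y - ω (Real.exp y) ≤ phiStar ω x :=
  le_csSup (phiStar_bddAbove hω hx) ⟨y, hy, rfl⟩

lemma phiStar_nonneg {ω : ℝ → ℝ} (hω : IsW0 ω) {x : ℝ} (hx : 0 ≤ x) :
    0 ≤ phiStar ω x := by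
  have := phiStar_ge hω hx (le_refl (0:ℝ))
  rw [Real.exp_zero, hω.one_eq] at this
  linarith

lemma phiStar_mono {ω : ℝ → ℝ} (hω : IsW0 ω) {x₁ x₂ : ℝ} (hx1 : 0 ≤ x₁) (h12 : x₁ ≤ x₂) :
    phiStar ω x₁ ≤ phiStar ω x₂ := by
  refine csSup_le (phiSet_nonempty ω x₁) ?_
  rintro z ⟨y, hy, rfl⟩
  have h1 : x₁ * y ≤ x₂ * y := mul_le_mul_of_nonneg_right h12 hy
  exact le_trans (by linarith) (phiStar_ge hω (le_trans hx1 h12) hy)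

lemma phiStar_zero {ω : ℝ → ℝ} (hω : IsW0 ω) : phiStar ω 0 = 0 := by
  refine le_antisymm ?_ (phiStar_nonneg hω (le_refl 0))
  refine csSup_le (phiSet_nonempty ω 0) ?_
  rintro z ⟨y, hy, rfl⟩
  have := hω.nonneg (Real.exp y)
  linarith

lemma assocSeq_pos (ω : ℝ → ℝ) (ℓ : ℝ) (p : ℕ) : 0 < assocSeq ω ℓ p := Real.exp_pos _

lemma log_assocSeq (ω : ℝ → ℝ) (ℓ : ℝ) (p : ℕ) :
    Real.log (assocSeq ω ℓ p) = (1 / ℓ) * phiStar ω (ℓ * p) := Real.log_exp _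

lemma log_assocSeq_nonneg {ω : ℝ → ℝ} (hω : IsW0 ω) {ℓ : ℝ} (hℓ : 0 < ℓ) (p : ℕ) :
    0 ≤ Real.log (assocSeq ω ℓ p) := by
  rw [log_assocSeq]
  have h1 : 0 ≤ phiStar ω (ℓ * p) := phiStar_nonneg hω (by positivity)
  positivity

def omSet (M : ℕ → ℝ) (t : ℝ) : Set ℝ := {z : ℝ | ∃ p : ℕ, z = Real.log (t ^ p / M p)}

lemma omegaSeq_eq (M : ℕ → ℝ) (t : ℝ) : omegaSeq M t = sSup (omSet M t) := rfl

lemma omSet_nonempty (M : ℕ → ℝ) (t : ℝ) : (omSet M t).Nonempty := ⟨_, 0, rfl⟩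

lemma omSet_mem_eq {ω : ℝ → ℝ} (ℓ : ℝ) {t : ℝ} (ht : 0 < t) (p : ℕ) :
    Real.log (t ^ p / assocSeq ω ℓ p) = p * Real.log t - Real.log (assocSeq ω ℓ p) := by
  rw [Real.log_div (by positivity) (ne_of_gt (assocSeq_pos ω ℓ p)), Real.log_pow]

/-- Each element of the `omegaSeq` set for an associated sequence is at most `ω t / ℓ`. -/
lemma omSet_elem_le {ω : ℝ → ℝ} (hω : IsW0 ω) {ℓ : ℝ} (hℓ : 0 < ℓ) {t : ℝ} (ht : 0 < t)
    (p : ℕ) : Real.log (t ^ p / assocSeq ω ℓ p) ≤ ω t / ℓ := by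
  rw [omSet_mem_eq ℓ ht, log_assocSeq]
  rcases le_or_gt 1 t with h1 | h1
  · have hlt : 0 ≤ Real.log t := Real.log_nonneg h1
    have := phiStar_ge hω (show 0 ≤ ℓ * p by positivity) hlt
    rw [Real.exp_log ht] at this
    have h2 : (p : ℝ) * Real.log t - (1/ℓ) * phiStar ω (ℓ * p) ≤
        (p : ℝ) * Real.log t - (1/ℓ) * (ℓ * p * Real.log t - ω t) := by
      have h3 : (1/ℓ) * (ℓ * p * Real.log t - ω t) ≤ (1/ℓ) * phiStar ω (ℓ * p) :=
        mul_le_mul_of_nonneg_left this (by positivity)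
      linarith
    calc (p:ℝ) * Real.log t - (1/ℓ) * phiStar ω (ℓ*p) ≤ _ := h2
      _ = ω t / ℓ := by field_simp; ring
  · have hlt : Real.log t ≤ 0 := Real.log_nonpos (le_of_lt ht) (le_of_lt h1)
    have h2 : (p:ℝ) * Real.log t ≤ 0 := mul_nonpos_of_nonneg_of_nonpos (by positivity) hlt
    have h3 : 0 ≤ (1/ℓ) * phiStar ω (ℓ * p) := by
      have := phiStar_nonneg hω (show 0 ≤ ℓ * p by positivity); positivity
    have h4 : 0 ≤ ω t / ℓ := by have := hω.nonneg t; positivity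
    linarith

lemma omSet_bddAbove {ω : ℝ → ℝ} (hω : IsW0 ω) {ℓ : ℝ} (hℓ : 0 < ℓ) {t : ℝ} (ht : 0 < t) :
    BddAbove (omSet (assocSeq ω ℓ) t) := by
  refine ⟨ω t / ℓ, ?_⟩
  rintro z ⟨p, rfl⟩
  exact omSet_elem_le hω hℓ ht p

lemma omegaSeq_le {ω : ℝ → ℝ} (hω : IsW0 ω) {ℓ : ℝ} (hℓ : 0 < ℓ) {t : ℝ} (ht : 0 < t) :
    omegaSeq (assocSeq ω ℓ) t ≤ ω t / ℓ :=
  Real.sSup_le (by rintro z ⟨p, rfl⟩; exact omSet_elem_le hω hℓ ht p)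
    (by have := hω.nonneg t; positivity)

lemma omegaSeq_nonneg {ω : ℝ → ℝ} (hω : IsW0 ω) {ℓ : ℝ} (hℓ : 0 < ℓ) {t : ℝ} (ht : 0 < t) :
    0 ≤ omegaSeq (assocSeq ω ℓ) t := by
  have h0 : Real.log (t ^ 0 / assocSeq ω ℓ 0) = 0 := by
    rw [omSet_mem_eq ℓ ht, log_assocSeq]
    simp [phiStar_zero hω]
  have := le_csSup (omSet_bddAbove hω hℓ ht) (⟨0, rfl⟩ : Real.log (t ^ 0 / assocSeq ω ℓ 0) ∈ omSet (assocSeq ω ℓ) t)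
  rw [h0] at this
  exact this

/-- Lower bound: `ω t / ℓ - log t ≤ omegaSeq (assocSeq ω ℓ) t` for `t ≥ 1`. -/
lemma omegaSeq_ge {ω : ℝ → ℝ} (hω : IsW0 ω) {ℓ : ℝ} (hℓ : 0 < ℓ) {t : ℝ} (ht : 1 ≤ t) :
    ω t / ℓ - Real.log t ≤ omegaSeq (assocSeq ω ℓ) t := by
  have ht0 : (0:ℝ) < t := lt_of_lt_of_le zero_lt_one ht
  set y := Real.log t with hy
  have hy0 : 0 ≤ y := Real.log_nonneg ht
  obtain ⟨x, hx0, hxsub⟩ := sg_exists _ hω.convex hω.expMono y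
  -- phiStar ω x = x * y - ω t
  have hps : phiStar ω x = x * y - ω t := by
    refine le_antisymm ?_ ?_
    · refine csSup_le (phiSet_nonempty ω x) ?_
      rintro z ⟨y', _, rfl⟩
      have := hxsub y'
      have het : ω (Real.exp y) = ω t := by rw [hy, Real.exp_log ht0]
      nlinarith
    · have := phiStar_ge hω hx0 hy0
      rw [hy, Real.exp_log ht0] at this
      exact this
  set p : ℕ := ⌊x / ℓ⌋₊ with hp
  have hpx : ℓ * p ≤ x := by
    have h1 : (⌊x / ℓ⌋₊ : ℝ) ≤ x / ℓ := Nat.floor_le (by positivity)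
    calc ℓ * (p:ℝ) ≤ ℓ * (x / ℓ) := mul_le_mul_of_nonneg_left h1 (le_of_lt hℓ)
      _ = x := by field_simp
  have hxp : x - ℓ ≤ ℓ * p := by
    have h1 : x / ℓ < (⌊x / ℓ⌋₊ : ℝ) + 1 := Nat.lt_floor_add_one _
    have h2 : x < ℓ * ((p:ℝ) + 1) := by
      calc x = ℓ * (x / ℓ) := by field_simp
        _ < ℓ * ((p:ℝ) + 1) := by exact mul_lt_mul_of_pos_left h1 hℓ
    nlinarith
  have hmono := phiStar_mono hω (show 0 ≤ ℓ * p by positivity) hpx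
  have helem : ω t / ℓ - y ≤ (p:ℝ) * y - (1/ℓ) * phiStar ω (ℓ * p) := by
    have h1 : (1/ℓ) * phiStar ω (ℓ * p) ≤ (1/ℓ) * phiStar ω x :=
      mul_le_mul_of_nonneg_left hmono (by positivity)
    rw [hps] at h1
    have h2 : ((x - ℓ)/ℓ) * y ≤ (p:ℝ) * y := by
      refine mul_le_mul_of_nonneg_right ?_ hy0
      rw [div_le_iff₀ hℓ]; nlinarith
    have h3 : ((x - ℓ)/ℓ) * y - (1/ℓ) * (x * y - ω t) = ω t / ℓ - y := by
      field_simp; ring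
    nlinarith
  refine le_trans helem ?_
  have hmem : (p:ℝ) * y - (1/ℓ) * phiStar ω (ℓ * p) ∈ omSet (assocSeq ω ℓ) t := by
    refine ⟨p, ?_⟩
    rw [omSet_mem_eq ℓ ht0, log_assocSeq, hy]
  exact le_csSup (omSet_bddAbove hω hℓ ht0) hmem

end Aux2
section Aux3

lemma om1_iter {ω : ℝ → ℝ} {L : ℝ} (hL : 1 ≤ L) (h1 : ∀ t : ℝ, 0 ≤ t → ω (2 * t) ≤ L * (ω t + 1))
    (k : ℕ) : ∀ t : ℝ, 0 ≤ t → ω (2 ^ k * t) ≤ L ^ k * ω t + k * L ^ k := by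
  induction k with
  | zero => intro t ht; simp
  | succ k ih =>
    intro t ht
    have h2 : (2:ℝ) ^ (k+1) * t = 2 * (2 ^ k * t) := by ring
    have h3 := h1 (2 ^ k * t) (by positivity)
    have h4 := ih t ht
    have hLk : (1:ℝ) ≤ L ^ k := one_le_pow₀ hL
    have hL0 : (0:ℝ) ≤ L := by linarith
    have hcast : ((k+1:ℕ):ℝ) = (k:ℝ) + 1 := by push_cast; ring
    rw [h2]
    calc ω (2 * (2 ^ k * t)) ≤ L * (ω (2 ^ k * t) + 1) := h3
      _ ≤ L * (L ^ k * ω t + k * L ^ k + 1) := by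
          refine mul_le_mul_of_nonneg_left ?_ hL0; linarith
      _ ≤ ((k+1:ℕ):ℝ) * L ^ (k+1) + L ^ (k+1) * ω t := by
          have he : L * (L ^ k * ω t + k * L ^ k + 1) =
            L ^ (k+1) * ω t + k * L ^ (k+1) + L := by ring
          rw [he, hcast]
          have h5 : L ≤ L ^ (k+1) := le_self_pow₀ (by linarith) (Nat.succ_ne_zero k)
          nlinarith
      _ = L ^ (k+1) * ω t + ((k+1:ℕ):ℝ) * L ^ (k+1) := by ring

lemma om6_iter {ω : ℝ → ℝ} {H : ℝ} (hH : 1 ≤ H) (h6 : ∀ t : ℝ, 0 ≤ t → 2 * ω t ≤ ω (H * t) + H)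
    (m : ℕ) : ∀ t : ℝ, 0 ≤ t → 2 ^ m * ω t ≤ ω (H ^ m * t) + (2 ^ m - 1) * H := by
  induction m with
  | zero => intro t ht; simp
  | succ m ih =>
    intro t ht
    have hH0 : (0:ℝ) < H := lt_of_lt_of_le one_pos hH
    have hHm : (0:ℝ) < H ^ m := pow_pos hH0 m
    have h3 := h6 (H ^ m * t) (mul_nonneg (le_of_lt hHm) ht)
    have h4 := ih t ht
    have h5 : H * (H ^ m * t) = H ^ (m+1) * t := by ring
    rw [h5] at h3
    calc (2:ℝ) ^ (m+1) * ω t = 2 * (2 ^ m * ω t) := by ring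
      _ ≤ 2 * (ω (H ^ m * t) + (2 ^ m - 1) * H) := by linarith
      _ ≤ ω (H ^ (m+1) * t) + H + 2 * ((2 ^ m - 1) * H) := by linarith
      _ = ω (H ^ (m+1) * t) + (2 ^ (m+1) - 1) * H := by ring

/-- From `σ = o(τ)` and monotonicity: a global affine bound. -/
lemma eps_bound {σ τ : ℝ → ℝ} (hσ : IsW0 σ) (hτn : ∀ t, 0 ≤ τ t)
    (ho : σ =o[atTop] τ) {ε : ℝ} (hε : 0 < ε) :
    ∃ C : ℝ, 0 ≤ C ∧ ∀ u : ℝ, 0 ≤ u → σ u ≤ ε * τ u + C := by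
  have h1 := (isLittleO_iff.1 ho) hε
  rw [eventually_atTop] at h1
  obtain ⟨T, hT⟩ := h1
  set T' := max T 0 with hT'
  refine ⟨σ T', hσ.nonneg T', fun u hu => ?_⟩
  rcases le_or_gt u T' with h | h
  · have h2 : σ u ≤ σ T' := hσ.mono hu (le_max_right T 0) h
    have h3 : 0 ≤ ε * τ u := mul_nonneg (le_of_lt hε) (hτn u)
    linarith
  · have h4 := hT u (le_trans (le_max_left T 0) (le_of_lt h))
    rw [Real.norm_eq_abs, Real.norm_eq_abs, abs_of_nonneg (hσ.nonneg u),
      abs_of_nonneg (hτn u)] at h4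
    have := hσ.nonneg T'
    linarith

/-- The `(ω₁)` claim. -/
lemma om1_claim {σ τ : ℝ → ℝ} (hσ : IsW0 σ) (hτ : IsW0 τ) (h1 : HasOm1 σ ∨ HasOm1 τ)
    (ho : σ =o[atTop] τ) {A c : ℝ} (hA : 1 ≤ A) (hc : 0 < c) :
    ∃ C : ℝ, 0 ≤ C ∧ ∀ u : ℝ, 0 ≤ u → σ (A * u) ≤ c * τ u + C := by
  have hA0 : (0:ℝ) ≤ A := by linarith
  rcases h1 with ⟨L, hL, hom⟩ | ⟨L, hL, hom⟩
  · -- (ω₁) for σ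
    obtain ⟨k, hk⟩ := pow_unbounded_of_one_lt A (show (1:ℝ) < 2 by norm_num)
    have hLk : (0:ℝ) < L ^ k := pow_pos (lt_of_lt_of_le one_pos hL) k
    obtain ⟨C, hC0, hC⟩ := eps_bound hσ hτ.nonneg ho (div_pos hc hLk)
    refine ⟨L ^ k * C + k * L ^ k, add_nonneg (mul_nonneg hLk.le hC0) (mul_nonneg (Nat.cast_nonneg k) hLk.le), fun u hu => ?_⟩
    have h2 : σ (A * u) ≤ σ (2 ^ k * u) := by
      refine hσ.mono (mul_nonneg hA0 hu) (mul_nonneg (by positivity) hu) ?_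
      exact mul_le_mul_of_nonneg_right (le_of_lt hk) hu
    have h3 := om1_iter hL hom k u hu
    have h4 := hC u hu
    calc σ (A * u) ≤ L ^ k * σ u + k * L ^ k := le_trans h2 h3
      _ ≤ L ^ k * (c / L ^ k * τ u + C) + k * L ^ k :=
          add_le_add_left (mul_le_mul_of_nonneg_left h4 (le_of_lt hLk)) _
      _ = c * τ u + (L ^ k * C + k * L ^ k) := by field_simp; ring
  · -- (ω₁) for τ
    obtain ⟨k, hk⟩ := pow_unbounded_of_one_lt A (show (1:ℝ) < 2 by norm_num)
    have hLk : (0:ℝ) < L ^ k := pow_pos (lt_of_lt_of_le one_pos hL) k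
    obtain ⟨C, hC0, hC⟩ := eps_bound hσ hτ.nonneg ho (div_pos hc hLk)
    have hck : 0 ≤ c / L ^ k := le_of_lt (div_pos hc hLk)
    refine ⟨c / L ^ k * (k * L ^ k) + C, add_nonneg (mul_nonneg hck (mul_nonneg (Nat.cast_nonneg k) hLk.le)) hC0, fun u hu => ?_⟩
    have h4 := hC (A * u) (mul_nonneg hA0 hu)
    have h2 : τ (A * u) ≤ τ (2 ^ k * u) := by
      refine hτ.mono (mul_nonneg hA0 hu) (mul_nonneg (by positivity) hu) ?_
      exact mul_le_mul_of_nonneg_right (le_of_lt hk) hu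
    have h3 := om1_iter hL hom k u hu
    have h5 : σ (A * u) ≤ c / L ^ k * (L ^ k * τ u + k * L ^ k) + C := by
      have h7 : τ (A * u) ≤ L ^ k * τ u + k * L ^ k := le_trans h2 h3
      have h6 : c / L ^ k * τ (A * u) ≤ c / L ^ k * (L ^ k * τ u + k * L ^ k) :=
        mul_le_mul_of_nonneg_left h7 hck
      linarith
    calc σ (A * u) ≤ c / L ^ k * (L ^ k * τ u + k * L ^ k) + C := h5
      _ = c * τ u + (c / L ^ k * (k * L ^ k) + C) := by field_simp; ring

end Aux3
section Aux4

lemma seqTriangle_bound {T S : ℕ → ℝ} (h : seqTriangle T S) (hT : ∀ p, 0 < T p)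
    (hS : ∀ p, 0 < S p) {ε : ℝ} (hε : 0 < ε) :
    ∃ C : ℝ, 1 ≤ C ∧ ∀ p : ℕ, T p ≤ C * ε ^ p * S p := by
  have h1 : ∀ᶠ p in atTop, (T p / S p) ^ (1 / (p:ℝ)) < ε :=
    h.eventually (Filter.Tendsto.eventually_lt_const hε tendsto_id) |>.mono (fun p hp => hp)
  rw [eventually_atTop] at h1
  obtain ⟨p₁, hp₁⟩ := h1
  set p₀ := max p₁ 1 with hp₀
  set C := 1 + ∑ q ∈ Finset.range p₀, T q / (ε ^ q * S q) with hCdef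
  have hterm : ∀ q, 0 ≤ T q / (ε ^ q * S q) := fun q =>
    le_of_lt (div_pos (hT q) (mul_pos (pow_pos hε q) (hS q)))
  have hsum : 0 ≤ ∑ q ∈ Finset.range p₀, T q / (ε ^ q * S q) :=
    Finset.sum_nonneg fun q _ => hterm q
  refine ⟨C, by rw [hCdef]; linarith, fun p => ?_⟩
  have hεS : 0 < ε ^ p * S p := mul_pos (pow_pos hε p) (hS p)
  rcases lt_or_ge p p₀ with h | h
  · have h2 : T p / (ε ^ p * S p) ≤ ∑ q ∈ Finset.range p₀, T q / (ε ^ q * S q) :=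
      Finset.single_le_sum (fun q _ => hterm q) (Finset.mem_range.2 h)
    have h3 : T p / (ε ^ p * S p) ≤ C := by rw [hCdef]; linarith
    rw [div_le_iff₀ hεS] at h3
    calc T p ≤ C * (ε ^ p * S p) := h3
      _ = C * ε ^ p * S p := by ring
  · have hp1 : 1 ≤ p := le_trans (le_max_right p₁ 1) h
    have hp1' : (p:ℝ) ≠ 0 := by
      have : 0 < p := hp1
      positivity
    have h2 := hp₁ p (le_trans (le_max_left p₁ 1) h)
    have hq : 0 ≤ T p / S p := le_of_lt (div_pos (hT p) (hS p))
    have h3 : T p / S p ≤ ε ^ p := by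
      have h4 : ((T p / S p) ^ (1 / (p:ℝ))) ^ (p:ℝ) ≤ ε ^ (p:ℝ) := by
        refine Real.rpow_le_rpow (Real.rpow_nonneg hq _) (le_of_lt h2) (Nat.cast_nonneg p)
      rw [← Real.rpow_natCast ε p]
      rw [← Real.rpow_mul hq, one_div, inv_mul_cancel₀ hp1', Real.rpow_one] at h4
      exact h4
    rw [div_le_iff₀ (hS p)] at h3
    have hC1 : (1:ℝ) ≤ C := by rw [hCdef]; linarith
    calc T p ≤ ε ^ p * S p := h3
      _ ≤ C * ε ^ p * S p := by nlinarith
  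
/-- Compare `omegaSeq` of two associated sequences given a term-wise domination. -/
lemma omega_compare {σ τ : ℝ → ℝ} (hσ : IsW0 σ) (hτ : IsW0 τ) {ℓ j : ℝ} (hℓ : 0 < ℓ)
    (hj : 0 < j) {ε C : ℝ} (hε : 0 < ε) (hC : 1 ≤ C)
    (hd : ∀ p : ℕ, assocSeq τ j p ≤ C * ε ^ p * assocSeq σ ℓ p) {t : ℝ} (ht : 0 < t) :
    omegaSeq (assocSeq σ ℓ) t ≤ omegaSeq (assocSeq τ j) (ε * t) + Real.log C := by
  have hεt : 0 < ε * t := mul_pos hε ht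
  refine Real.sSup_le ?_ (add_nonneg (omegaSeq_nonneg hτ hj hεt) (Real.log_nonneg hC))
  rintro z ⟨p, rfl⟩
  rw [omSet_mem_eq ℓ ht]
  have h1 : Real.log (assocSeq τ j p) ≤ Real.log C + p * Real.log ε + Real.log (assocSeq σ ℓ p) := by
    have h2 := Real.log_le_log (assocSeq_pos τ j p) (hd p)
    rw [Real.log_mul (by positivity) (ne_of_gt (assocSeq_pos σ ℓ p)),
      Real.log_mul (by linarith : C ≠ 0) (by positivity), Real.log_pow] at h2
    linarith
  have hmem : (p:ℝ) * Real.log (ε * t) - Real.log (assocSeq τ j p) ∈ omSet (assocSeq τ j) (ε * t) := by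
    refine ⟨p, ?_⟩
    rw [omSet_mem_eq j hεt]
  have h3 := le_csSup (omSet_bddAbove hτ hj hεt) hmem
  rw [Real.log_mul (ne_of_gt hε) (ne_of_gt ht)] at h3
  rw [omegaSeq_eq]
  have h4 : (p:ℝ) * Real.log t - Real.log (assocSeq σ ℓ p) ≤
      (p:ℝ) * (Real.log ε + Real.log t) - Real.log (assocSeq τ j p) + Real.log C := by
    nlinarith
  exact le_trans h4 (by linarith)

end Aux4
section Aux5

lemma seqTriangle_of_log {T S : ℕ → ℝ} (hT : ∀ p, 0 < T p) (hS : ∀ p, 0 < S p)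
    (h : ∀ R : ℝ, 0 < R → ∃ P : ℕ, ∀ p, P ≤ p → Real.log (T p) ≤ Real.log (S p) - R * p) :
    seqTriangle T S := by
  have hfun : (fun p : ℕ => (T p / S p) ^ (1 / (p:ℝ))) =
      fun p : ℕ => Real.exp (Real.log (T p / S p) * (1 / (p:ℝ))) := by
    funext p
    exact Real.rpow_def_of_pos (div_pos (hT p) (hS p)) _
  rw [seqTriangle, hfun]
  have hbot : Tendsto (fun p : ℕ => Real.log (T p / S p) * (1 / (p:ℝ))) atTop atBot := by
    rw [tendsto_atBot]
    intro b
    obtain ⟨P, hP⟩ := h (max 1 (-b)) (lt_of_lt_of_le one_pos (le_max_left _ _))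
    rw [eventually_atTop]
    refine ⟨max P 1, fun p hp => ?_⟩
    have hp1 : 1 ≤ p := le_trans (le_max_right P 1) hp
    have hpP : P ≤ p := le_trans (le_max_left P 1) hp
    have hpp : (0:ℝ) < p := by exact_mod_cast hp1
    have h1 := hP p hpP
    rw [Real.log_div (ne_of_gt (hT p)) (ne_of_gt (hS p))]
    have h2 : Real.log (T p) - Real.log (S p) ≤ -(max 1 (-b)) * p := by linarith
    have h3 : (Real.log (T p) - Real.log (S p)) * (1/(p:ℝ)) ≤ (-(max 1 (-b)) * p) * (1/(p:ℝ)) :=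
      mul_le_mul_of_nonneg_right h2 (by positivity)
    have h4 : (-(max 1 (-b)) * p) * (1/(p:ℝ)) = -(max 1 (-b)) := by
      field_simp
    rw [h4] at h3
    have h5 : -(max 1 (-b)) ≤ b := by
      have := le_max_right 1 (-b); linarith
    linarith
  exact Real.tendsto_exp_atBot.comp hbot

lemma lem_i_to_iii {σ τ : ℝ → ℝ} (hσ : IsW0 σ) (hτ : IsW0 τ) (ho : σ =o[atTop] τ)
    {ℓ j : ℝ} (hℓ : 0 < ℓ) (hj : 0 < j) :
    omegaSeq (assocSeq σ j) =o[atTop] omegaSeq (assocSeq τ ℓ) := by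
  rw [isLittleO_iff]
  intro c hc
  have h1 := (isLittleO_iff.1 hτ.logo) (show (0:ℝ) < 1/(2*ℓ) by positivity)
  have h2 := (isLittleO_iff.1 ho) (show (0:ℝ) < c * j / (2*ℓ) by positivity)
  filter_upwards [eventually_ge_atTop (1:ℝ), h1, h2] with t ht h1t h2t
  have ht0 : (0:ℝ) < t := lt_of_lt_of_le one_pos ht
  rw [Real.norm_eq_abs, Real.norm_eq_abs, abs_of_nonneg (Real.log_nonneg ht),
    abs_of_nonneg (hτ.nonneg t)] at h1t
  rw [Real.norm_eq_abs, Real.norm_eq_abs, abs_of_nonneg (hσ.nonneg t),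
    abs_of_nonneg (hτ.nonneg t)] at h2t
  rw [Real.norm_eq_abs, Real.norm_eq_abs, abs_of_nonneg (omegaSeq_nonneg hσ hj ht0),
    abs_of_nonneg (omegaSeq_nonneg hτ hℓ ht0)]
  have h3 : omegaSeq (assocSeq σ j) t ≤ σ t / j := omegaSeq_le hσ hj ht0
  have h4 : τ t / ℓ - Real.log t ≤ omegaSeq (assocSeq τ ℓ) t := omegaSeq_ge hτ hℓ ht
  have h5 : σ t / j ≤ c * τ t / (2*ℓ) := by
    rw [div_le_div_iff₀ hj (by positivity)]
    calc σ t * (2*ℓ) ≤ (c * j / (2*ℓ) * τ t) * (2*ℓ) :=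
          mul_le_mul_of_nonneg_right h2t (by positivity)
      _ = c * τ t * j := by field_simp
  have h6 : c * τ t / (2*ℓ) ≤ c * (τ t / ℓ - Real.log t) := by
    have : Real.log t ≤ τ t / (2*ℓ) := by
      calc Real.log t ≤ 1/(2*ℓ) * τ t := h1t
        _ = τ t / (2*ℓ) := by ring
    have hr : c * τ t / (2*ℓ) = c * (τ t / ℓ - τ t / (2*ℓ)) := by field_simp; ring
    rw [hr]
    refine mul_le_mul_of_nonneg_left ?_ (le_of_lt hc)
    linarith
  calc omegaSeq (assocSeq σ j) t ≤ σ t / j := h3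
    _ ≤ c * τ t / (2*ℓ) := h5
    _ ≤ c * (τ t / ℓ - Real.log t) := h6
    _ ≤ c * omegaSeq (assocSeq τ ℓ) t := mul_le_mul_of_nonneg_left h4 (le_of_lt hc)

lemma lem_ii_to_i {σ τ : ℝ → ℝ} (hσ : IsW0 σ) (hτ : IsW0 τ) {ℓ₀ j₀ : ℝ} (hℓ₀ : 0 < ℓ₀)
    (hj₀ : 0 < j₀) (ho : omegaSeq (assocSeq σ j₀) =o[atTop] omegaSeq (assocSeq τ ℓ₀)) :
    σ =o[atTop] τ := by
  rw [isLittleO_iff]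
  intro c hc
  have h1 := (isLittleO_iff.1 ho) (show (0:ℝ) < c * ℓ₀ / (2*j₀) by positivity)
  have h2 := (isLittleO_iff.1 hτ.logo) (show (0:ℝ) < c / (2*j₀) by positivity)
  filter_upwards [eventually_ge_atTop (1:ℝ), h1, h2] with t ht h1t h2t
  have ht0 : (0:ℝ) < t := lt_of_lt_of_le one_pos ht
  rw [Real.norm_eq_abs, Real.norm_eq_abs, abs_of_nonneg (omegaSeq_nonneg hσ hj₀ ht0),
    abs_of_nonneg (omegaSeq_nonneg hτ hℓ₀ ht0)] at h1t
  rw [Real.norm_eq_abs, Real.norm_eq_abs, abs_of_nonneg (Real.log_nonneg ht),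
    abs_of_nonneg (hτ.nonneg t)] at h2t
  rw [Real.norm_eq_abs, Real.norm_eq_abs, abs_of_nonneg (hσ.nonneg t),
    abs_of_nonneg (hτ.nonneg t)]
  have h3 : σ t / j₀ - Real.log t ≤ omegaSeq (assocSeq σ j₀) t := omegaSeq_ge hσ hj₀ ht
  have h4 : omegaSeq (assocSeq τ ℓ₀) t ≤ τ t / ℓ₀ := omegaSeq_le hτ hℓ₀ ht0
  have h5 : σ t / j₀ ≤ c * ℓ₀ / (2*j₀) * (τ t / ℓ₀) + Real.log t := by
    have h6 : omegaSeq (assocSeq σ j₀) t ≤ c * ℓ₀ / (2*j₀) * (τ t / ℓ₀) := by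
      refine le_trans h1t (mul_le_mul_of_nonneg_left h4 (by positivity))
    linarith
  have h7 : c * ℓ₀ / (2*j₀) * (τ t / ℓ₀) = c / (2*j₀) * τ t := by field_simp
  rw [h7] at h5
  have h8 : σ t ≤ j₀ * (c / (2*j₀) * τ t + Real.log t) := by
    have := mul_le_mul_of_nonneg_left h5 (le_of_lt hj₀)
    calc σ t = j₀ * (σ t / j₀) := by field_simp
      _ ≤ j₀ * (c / (2*j₀) * τ t + Real.log t) := this
  have h9 : Real.log t ≤ c / (2*j₀) * τ t := h2t
  calc σ t ≤ j₀ * (c / (2*j₀) * τ t + Real.log t) := h8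
    _ ≤ j₀ * (c / (2*j₀) * τ t + c / (2*j₀) * τ t) := by
        refine mul_le_mul_of_nonneg_left (by linarith) (le_of_lt hj₀)
    _ = c * τ t := by field_simp; ring

end Aux5
section Aux6

lemma lem_vi_to_i {σ τ : ℝ → ℝ} (hσ : IsW0 σ) (hτ : IsW0 τ)
    (hvi : ∀ ℓ : ℝ, 0 < ℓ → ∀ j : ℝ, 0 < j → seqTriangle (assocSeq τ j) (assocSeq σ ℓ)) :
    σ =o[atTop] τ := by
  rw [isLittleO_iff]
  intro c hc
  set j := 2 / c with hjdef
  have hj : 0 < j := by positivity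
  obtain ⟨C, hC1, hC⟩ := seqTriangle_bound (hvi 1 one_pos j hj)
    (fun p => assocSeq_pos τ j p) (fun p => assocSeq_pos σ 1 p) one_pos
  have hcomp : ∀ t : ℝ, 0 < t →
      omegaSeq (assocSeq σ 1) t ≤ omegaSeq (assocSeq τ j) (1 * t) + Real.log C :=
    fun t ht => omega_compare hσ hτ one_pos hj one_pos hC1 hC ht
  have h2 := (isLittleO_iff.1 hτ.logo) (show (0:ℝ) < c/4 by positivity)
  have h3 : ∀ᶠ t : ℝ in atTop, 4 / c * Real.log C ≤ τ t :=
    hτ.tendsto.eventually_ge_atTop _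
  filter_upwards [eventually_ge_atTop (1:ℝ), h2, h3] with t ht h2t h3t
  have ht0 : (0:ℝ) < t := lt_of_lt_of_le one_pos ht
  rw [Real.norm_eq_abs, Real.norm_eq_abs, abs_of_nonneg (Real.log_nonneg ht),
    abs_of_nonneg (hτ.nonneg t)] at h2t
  rw [Real.norm_eq_abs, Real.norm_eq_abs, abs_of_nonneg (hσ.nonneg t),
    abs_of_nonneg (hτ.nonneg t)]
  have h4 : σ t / 1 - Real.log t ≤ omegaSeq (assocSeq σ 1) t := omegaSeq_ge hσ one_pos ht
  have h5 := hcomp t ht0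
  rw [one_mul] at h5
  have h6 : omegaSeq (assocSeq τ j) t ≤ τ t / j := omegaSeq_le hτ hj ht0
  have h7 : τ t / j = c / 2 * τ t := by rw [hjdef]; field_simp
  have h8 : Real.log C ≤ c / 4 * τ t := by
    have h9 : 4 / c * Real.log C ≤ τ t := h3t
    have h10 : Real.log C = c / 4 * (4 / c * Real.log C) := by field_simp
    rw [h10]
    exact mul_le_mul_of_nonneg_left h9 (by positivity)
  have h11 : Real.log t ≤ c / 4 * τ t := h2t
  have : σ t / 1 = σ t := by ring
  nlinarith [h4, h5, h6]

/-- Core estimate: under `(ω₁)` and `σ = o(τ)`, `T^{(j)} ◁ S^{(ℓ)}` for all parameters. -/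
lemma lem_i_om1_to_vi {σ τ : ℝ → ℝ} (hσ : IsW0 σ) (hτ : IsW0 τ)
    (h1 : HasOm1 σ ∨ HasOm1 τ) (ho : σ =o[atTop] τ) {ℓ j : ℝ} (hℓ : 0 < ℓ) (hj : 0 < j) :
    seqTriangle (assocSeq τ j) (assocSeq σ ℓ) := by
  refine seqTriangle_of_log (fun p => assocSeq_pos τ j p) (fun p => assocSeq_pos σ ℓ p) ?_
  intro R hR
  have hA : (1:ℝ) ≤ Real.exp (R + 1) := Real.one_le_exp (by linarith)
  obtain ⟨C, hC0, hC⟩ := om1_claim hσ hτ h1 ho hA (show 0 < ℓ/j by positivity)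
  obtain ⟨P, hP⟩ := exists_nat_ge (C / ℓ)
  refine ⟨P, fun p hp => ?_⟩
  rw [log_assocSeq, log_assocSeq]
  have hpC : C / ℓ ≤ (p:ℝ) := le_trans hP (by exact_mod_cast hp)
  -- enough: φ*τ(jp) ≤ j * ((1/ℓ) φ*σ(ℓp) - R p)
  have hkey : phiStar τ (j * p) ≤ j * ((1/ℓ) * phiStar σ (ℓ * p) - R * p) := by
    refine csSup_le (phiSet_nonempty τ (j * p)) ?_
    rintro z ⟨y, hy, rfl⟩
    -- φ*σ(ℓp) ≥ ℓ p (y + R + 1) - σ (exp (y + R + 1))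
    have hps := phiStar_ge hσ (show 0 ≤ ℓ * p by positivity) (show 0 ≤ y + R + 1 by linarith)
    have hexp : Real.exp (y + R + 1) = Real.exp (R + 1) * Real.exp y := by
      rw [← Real.exp_add]; ring_nf
    have hcl := hC (Real.exp y) (le_of_lt (Real.exp_pos y))
    rw [← hexp] at hcl
    -- hcl : σ (exp (y+R+1)) ≤ ℓ/j * τ (exp y) + C
    have h2 : ℓ * p * (y + R + 1) - (ℓ/j * τ (Real.exp y) + C) ≤ phiStar σ (ℓ * p) := by
      have := hσ.nonneg (Real.exp (y + R + 1))
      linarith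
    have h3 : (1/ℓ) * phiStar σ (ℓ * p) ≥
        (p:ℝ) * (y + R + 1) - (1/j) * τ (Real.exp y) - C/ℓ := by
      have h4 := mul_le_mul_of_nonneg_left h2 (show (0:ℝ) ≤ 1/ℓ by positivity)
      have h5 : (1/ℓ) * (ℓ * p * (y + R + 1) - (ℓ/j * τ (Real.exp y) + C)) =
          (p:ℝ) * (y + R + 1) - (1/j) * τ (Real.exp y) - C/ℓ := by
        field_simp; ring
      linarith
    have h6 : j * p * y - τ (Real.exp y) ≤
        j * ((p:ℝ) * (y + R + 1) - (1/j) * τ (Real.exp y) - C/ℓ - R * p) := by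
      have h7 : j * ((p:ℝ) * (y + R + 1) - (1/j) * τ (Real.exp y) - C/ℓ - R * p) =
          j * p * y + j * ((p:ℝ) - C/ℓ) - τ (Real.exp y) := by
        field_simp; ring
      rw [h7]
      have h8 : 0 ≤ j * ((p:ℝ) - C/ℓ) := mul_nonneg (le_of_lt hj) (by linarith)
      linarith
    calc j * (p:ℝ) * y - τ (Real.exp y) ≤ _ := h6
      _ ≤ j * ((1/ℓ) * phiStar σ (ℓ * p) - R * p) := by
          refine mul_le_mul_of_nonneg_left ?_ (le_of_lt hj)
          linarith
  have h9 := mul_le_mul_of_nonneg_left hkey (show (0:ℝ) ≤ 1/j by positivity)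
  have h10 : (1/j) * (j * ((1/ℓ) * phiStar σ (ℓ * p) - R * p)) =
      (1/ℓ) * phiStar σ (ℓ * p) - R * p := by field_simp
  linarith

lemma lem_i_om1_to_iv {σ τ : ℝ → ℝ} (hσ : IsW0 σ) (hτ : IsW0 τ)
    (h1 : HasOm1 σ ∨ HasOm1 τ) (ho : σ =o[atTop] τ) : UpperConjWD σ τ := by
  intro t ht
  obtain ⟨C, hC0, hC⟩ := om1_claim hσ hτ h1 ho (le_max_right t 1) one_pos
  refine ⟨C, ?_⟩
  rintro z ⟨s, hs, rfl⟩
  have hst : 0 ≤ s / t := div_nonneg hs (le_of_lt ht)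
  have h2 : s ≤ max t 1 * (s / t) := by
    have h3 : s = t * (s / t) := by field_simp
    calc s = t * (s / t) := h3
      _ ≤ max t 1 * (s / t) := mul_le_mul_of_nonneg_right (le_max_left t 1) hst
  have h4 : σ s ≤ σ (max t 1 * (s / t)) := by
    refine hσ.mono hs ?_ h2
    exact mul_nonneg (le_trans zero_le_one (le_max_right t 1)) hst
  have h5 := hC (s / t) hst
  have := hτ.nonneg (s/t)
  nlinarith

/-- Key estimate for parts using `(ω₆)`. -/
lemma key56 {σ τ : ℝ → ℝ} (hσ : IsW0 σ) (hτ : IsW0 τ) {ℓ₀ j₀ : ℝ} (hℓ₀ : 0 < ℓ₀)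
    (hj₀ : 0 < j₀) (hst : seqTriangle (assocSeq τ j₀) (assocSeq σ ℓ₀)) {ε : ℝ} (hε : 0 < ε) :
    ∃ C : ℝ, 1 ≤ C ∧ ∀ t : ℝ, 1 ≤ t →
      σ t ≤ ℓ₀ / j₀ * τ (ε * t) + ℓ₀ * (Real.log C + Real.log t) := by
  obtain ⟨C, hC1, hC⟩ := seqTriangle_bound hst (fun p => assocSeq_pos τ j₀ p)
    (fun p => assocSeq_pos σ ℓ₀ p) hε
  refine ⟨C, hC1, fun t ht => ?_⟩
  have ht0 : (0:ℝ) < t := lt_of_lt_of_le one_pos ht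
  have h1 : σ t / ℓ₀ - Real.log t ≤ omegaSeq (assocSeq σ ℓ₀) t := omegaSeq_ge hσ hℓ₀ ht
  have h2 := omega_compare hσ hτ hℓ₀ hj₀ hε hC1 hC ht0
  have h3 : omegaSeq (assocSeq τ j₀) (ε * t) ≤ τ (ε * t) / j₀ :=
    omegaSeq_le hτ hj₀ (mul_pos hε ht0)
  have h4 : σ t / ℓ₀ ≤ τ (ε * t) / j₀ + Real.log C + Real.log t := by linarith
  have h5 := mul_le_mul_of_nonneg_left h4 (le_of_lt hℓ₀)
  calc σ t = ℓ₀ * (σ t / ℓ₀) := by field_simp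
    _ ≤ ℓ₀ * (τ (ε * t) / j₀ + Real.log C + Real.log t) := h5
    _ = ℓ₀ / j₀ * τ (ε * t) + ℓ₀ * (Real.log C + Real.log t) := by field_simp; ring

end Aux6
section Aux7

set_option maxHeartbeats 1000000 in
lemma lem_v_om6_to_i {σ τ : ℝ → ℝ} (hσ : IsW0 σ) (hτ : IsW0 τ) (h6 : HasOm6 σ ∨ HasOm6 τ)
    {ℓ₀ j₀ : ℝ} (hℓ₀ : 0 < ℓ₀) (hj₀ : 0 < j₀)
    (hst : seqTriangle (assocSeq τ j₀) (assocSeq σ ℓ₀)) : σ =o[atTop] τ := by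
  rw [isLittleO_iff]
  intro c hc
  obtain ⟨m, hm⟩ := pow_unbounded_of_one_lt (2 * ℓ₀ / (c * j₀)) (show (1:ℝ) < 2 by norm_num)
  set P := (2:ℝ) ^ m with hPdef
  have hP0 : (0:ℝ) < P := by positivity
  have hP1 : (1:ℝ) ≤ P := one_le_pow₀ (by norm_num)
  have hfrac : ∀ X : ℝ, 1/P * (P * X) = X := fun X => by
    rw [← mul_assoc, one_div_mul_cancel (ne_of_gt hP0), one_mul]
  have hmP : ℓ₀ / (j₀ * P) ≤ c / 2 := by
    rw [div_le_div_iff₀ (by positivity) (by norm_num)]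
    rw [div_lt_iff₀ (by positivity)] at hm
    nlinarith
  rcases h6 with ⟨H, hH, hom⟩ | ⟨H, hH, hom⟩
  · -- (ω₆) for σ
    have hH0 : (0:ℝ) < H := lt_of_lt_of_le one_pos hH
    have hHm : (0:ℝ) < H ^ m := pow_pos hH0 m
    have hHm1 : (1:ℝ) ≤ H ^ m := one_le_pow₀ hH
    obtain ⟨C, hC1, hC⟩ := key56 hσ hτ hℓ₀ hj₀ hst (show (0:ℝ) < (H ^ m)⁻¹ by positivity)
    set K := (ℓ₀ * (Real.log C + m * Real.log H)) / P + H with hKdef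
    have h2 := (isLittleO_iff.1 hτ.logo) (show (0:ℝ) < c * P / (4 * ℓ₀) by positivity)
    have h3 : ∀ᶠ u : ℝ in atTop, 4 / c * K ≤ τ u := hτ.tendsto.eventually_ge_atTop _
    filter_upwards [eventually_ge_atTop (1:ℝ), h2, h3] with u hu h2u h3u
    have hu0 : (0:ℝ) < u := lt_of_lt_of_le one_pos hu
    rw [Real.norm_eq_abs, Real.norm_eq_abs, abs_of_nonneg (Real.log_nonneg hu),
      abs_of_nonneg (hτ.nonneg u)] at h2u
    rw [Real.norm_eq_abs, Real.norm_eq_abs, abs_of_nonneg (hσ.nonneg u),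
      abs_of_nonneg (hτ.nonneg u)]
    have ht1 : (1:ℝ) ≤ H ^ m * u := one_le_mul_of_one_le_of_one_le hHm1 hu
    have h4 := hC (H ^ m * u) ht1
    have h5 : (H ^ m)⁻¹ * (H ^ m * u) = u := by field_simp
    rw [h5] at h4
    have hlog : Real.log (H ^ m * u) = m * Real.log H + Real.log u := by
      rw [Real.log_mul (by positivity) (ne_of_gt hu0), Real.log_pow]
    rw [hlog] at h4
    have h7 := om6_iter hH hom m u (le_of_lt hu0)
    -- P * σ u ≤ σ (H^m u) + (P - 1) * H ≤ ℓ₀/j₀ τ u + ℓ₀ (log C + m log H + log u) + P H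
    have h8 : P * σ u ≤ ℓ₀ / j₀ * τ u + ℓ₀ * (Real.log C + (m * Real.log H + Real.log u))
        + (P - 1) * H := by rw [← hPdef] at h7; linarith
    have h9 : σ u ≤ ℓ₀ / (j₀ * P) * τ u + (ℓ₀ * (Real.log C + m * Real.log H)) / P
        + ℓ₀ / P * Real.log u + H := by
      have h10 := mul_le_mul_of_nonneg_left h8 (show (0:ℝ) ≤ 1/P by positivity)
      have h11 : 1/P * (P * σ u) = σ u := hfrac _
      have h12 : 1/P * (ℓ₀ / j₀ * τ u + ℓ₀ * (Real.log C + (m * Real.log H + Real.log u))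
          + (P - 1) * H) = ℓ₀ / (j₀ * P) * τ u + (ℓ₀ * (Real.log C + m * Real.log H)) / P
          + ℓ₀ / P * Real.log u + (1 - 1/P) * H := by field_simp; ring
      rw [h11, h12] at h10
      have h13 : (1 - 1/P) * H ≤ H := by
        have h14 : 0 < 1/P := by positivity
        nlinarith
      linarith
    have h15 : ℓ₀ / (j₀ * P) * τ u ≤ c/2 * τ u :=
      mul_le_mul_of_nonneg_right hmP (hτ.nonneg u)
    have h16 : ℓ₀ / P * Real.log u ≤ c/4 * τ u := by
      have h17 := mul_le_mul_of_nonneg_left h2u (show (0:ℝ) ≤ ℓ₀ / P by positivity)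
      have h18 : ℓ₀ / P * (c * P / (4 * ℓ₀) * τ u) = c/4 * τ u := by field_simp
      linarith
    have h19 : (ℓ₀ * (Real.log C + m * Real.log H)) / P + H ≤ c/4 * τ u := by
      have h20 : K ≤ c/4 * τ u := by
        have h21 : K = c/4 * (4/c * K) := by field_simp
        rw [h21]
        exact mul_le_mul_of_nonneg_left h3u (by positivity)
      rw [hKdef] at h20
      linarith
    linarith
  · -- (ω₆) for τ
    have hH0 : (0:ℝ) < H := lt_of_lt_of_le one_pos hH
    have hHm : (0:ℝ) < H ^ m := pow_pos hH0 m
    obtain ⟨C, hC1, hC⟩ := key56 hσ hτ hℓ₀ hj₀ hst (show (0:ℝ) < (H ^ m)⁻¹ by positivity)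
    set K := ℓ₀ / j₀ * H + ℓ₀ * Real.log C with hKdef
    have h2 := (isLittleO_iff.1 hτ.logo) (show (0:ℝ) < c / (4 * ℓ₀) by positivity)
    have h3 : ∀ᶠ u : ℝ in atTop, 4 / c * K ≤ τ u := hτ.tendsto.eventually_ge_atTop _
    filter_upwards [eventually_ge_atTop (1:ℝ), h2, h3] with t ht h2t h3t
    have ht0 : (0:ℝ) < t := lt_of_lt_of_le one_pos ht
    rw [Real.norm_eq_abs, Real.norm_eq_abs, abs_of_nonneg (Real.log_nonneg ht),
      abs_of_nonneg (hτ.nonneg t)] at h2t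
    rw [Real.norm_eq_abs, Real.norm_eq_abs, abs_of_nonneg (hσ.nonneg t),
      abs_of_nonneg (hτ.nonneg t)]
    have h4 := hC t ht
    have h7 := om6_iter hH hom m ((H ^ m)⁻¹ * t) (by positivity)
    have h5 : H ^ m * ((H ^ m)⁻¹ * t) = t := by field_simp
    rw [h5] at h7
    -- τ ((H^m)⁻¹ t) ≤ τ t / P + H
    have h8 : τ ((H ^ m)⁻¹ * t) ≤ τ t / P + H := by
      rw [← hPdef] at h7
      have h9 := mul_le_mul_of_nonneg_left h7 (show (0:ℝ) ≤ 1/P by positivity)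
      have h10 : 1/P * (P * τ ((H ^ m)⁻¹ * t)) = τ ((H ^ m)⁻¹ * t) := hfrac _
      have h11 : 1/P * (τ t + (P - 1) * H) = τ t / P + (1 - 1/P) * H := by
        field_simp
      have h13 : (1 - 1/P) * H ≤ H := by
        have h14 : 0 < 1/P := by positivity
        nlinarith
      rw [h10, h11] at h9
      linarith
    have h15 : ℓ₀ / j₀ * τ ((H ^ m)⁻¹ * t) ≤ ℓ₀ / (j₀ * P) * τ t + ℓ₀ / j₀ * H := by
      have := mul_le_mul_of_nonneg_left h8 (show (0:ℝ) ≤ ℓ₀ / j₀ by positivity)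
      have he : ℓ₀ / j₀ * (τ t / P + H) = ℓ₀ / (j₀ * P) * τ t + ℓ₀ / j₀ * H := by
        ring
      linarith
    have h16 : ℓ₀ / (j₀ * P) * τ t ≤ c/2 * τ t :=
      mul_le_mul_of_nonneg_right hmP (hτ.nonneg t)
    have h17 : ℓ₀ * Real.log t ≤ c/4 * τ t := by
      have h18 := mul_le_mul_of_nonneg_left h2t (le_of_lt hℓ₀)
      have h19 : ℓ₀ * (c / (4 * ℓ₀) * τ t) = c/4 * τ t := by field_simp
      linarith
    have h20 : K ≤ c/4 * τ t := by
      have h21 : K = c/4 * (4/c * K) := by field_simp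
      rw [h21]
      exact mul_le_mul_of_nonneg_left h3t (by positivity)
    rw [hKdef] at h20
    nlinarith [h4, h15]

set_option maxHeartbeats 1000000 in
lemma lem_iv_om6_to_i {σ τ : ℝ → ℝ} (hσ : IsW0 σ) (hτ : IsW0 τ) (h6 : HasOm6 σ ∨ HasOm6 τ)
    (hiv : UpperConjWD σ τ) : σ =o[atTop] τ := by
  rw [isLittleO_iff]
  intro c hc
  obtain ⟨m, hm⟩ := pow_unbounded_of_one_lt (2 / c) (show (1:ℝ) < 2 by norm_num)
  set P := (2:ℝ) ^ m with hPdef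
  have hP0 : (0:ℝ) < P := by positivity
  have hfrac : ∀ X : ℝ, 1/P * (P * X) = X := fun X => by
    rw [← mul_assoc, one_div_mul_cancel (ne_of_gt hP0), one_mul]
  have hinvP : 1 / P ≤ c / 2 := by
    rw [div_le_div_iff₀ hP0 (by norm_num)]
    rw [div_lt_iff₀ hc] at hm
    nlinarith
  rcases h6 with ⟨H, hH, hom⟩ | ⟨H, hH, hom⟩
  · -- (ω₆) for σ
    have hH0 : (0:ℝ) < H := lt_of_lt_of_le one_pos hH
    have hHm : (0:ℝ) < H ^ m := pow_pos hH0 m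
    obtain ⟨B, hB⟩ := hiv (H ^ m) hHm
    set K := B / P + H with hKdef
    have h3 : ∀ᶠ u : ℝ in atTop, 2 / c * K ≤ τ u := hτ.tendsto.eventually_ge_atTop _
    filter_upwards [eventually_ge_atTop (0:ℝ), h3] with u hu h3u
    rw [Real.norm_eq_abs, Real.norm_eq_abs, abs_of_nonneg (hσ.nonneg u),
      abs_of_nonneg (hτ.nonneg u)]
    have hmem : σ (H ^ m * u) - τ ((H ^ m * u) / H ^ m) ≤ B :=
      hB ⟨H ^ m * u, by positivity, rfl⟩
    have h5 : (H ^ m * u) / H ^ m = u := by field_simp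
    rw [h5] at hmem
    have h7 := om6_iter hH hom m u hu
    -- P σ u ≤ σ (H^m u) + (P-1) H ≤ τ u + B + (P-1) H
    have h8 : P * σ u ≤ τ u + B + (P - 1) * H := by rw [← hPdef] at h7; linarith
    have h9 : σ u ≤ τ u / P + K := by
      have h10 := mul_le_mul_of_nonneg_left h8 (show (0:ℝ) ≤ 1/P by positivity)
      have h11 : 1/P * (P * σ u) = σ u := hfrac _
      have h12 : 1/P * (τ u + B + (P - 1) * H) = τ u / P + B / P + (1 - 1/P) * H := by
        field_simp
      rw [h11, h12] at h10
      have h13 : (1 - 1/P) * H ≤ H := by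
        have h14 : 0 < 1/P := by positivity
        nlinarith
      rw [hKdef]
      linarith
    have h15 : τ u / P ≤ c/2 * τ u := by
      have := mul_le_mul_of_nonneg_right hinvP (hτ.nonneg u)
      calc τ u / P = 1/P * τ u := by ring
        _ ≤ c/2 * τ u := by linarith [mul_le_mul_of_nonneg_right hinvP (hτ.nonneg u)]
    have h16 : K ≤ c/2 * τ u := by
      have h17 : K = c/2 * (2/c * K) := by field_simp
      rw [h17]
      exact mul_le_mul_of_nonneg_left h3u (by positivity)
    linarith
  · -- (ω₆) for τ
    have hH0 : (0:ℝ) < H := lt_of_lt_of_le one_pos hH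
    have hHm : (0:ℝ) < H ^ m := pow_pos hH0 m
    obtain ⟨B, hB⟩ := hiv (H ^ m) hHm
    set K := B + H with hKdef
    have h3 : ∀ᶠ u : ℝ in atTop, 2 / c * K ≤ τ u := hτ.tendsto.eventually_ge_atTop _
    filter_upwards [eventually_ge_atTop (0:ℝ), h3] with s hs h3s
    rw [Real.norm_eq_abs, Real.norm_eq_abs, abs_of_nonneg (hσ.nonneg s),
      abs_of_nonneg (hτ.nonneg s)]
    have hmem : σ s - τ (s / H ^ m) ≤ B := hB ⟨s, hs, rfl⟩
    have h7 := om6_iter hH hom m (s / H ^ m) (by positivity)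
    have h5 : H ^ m * (s / H ^ m) = s := by field_simp
    rw [h5] at h7
    have h8 : τ (s / H ^ m) ≤ τ s / P + H := by
      rw [← hPdef] at h7
      have h9 := mul_le_mul_of_nonneg_left h7 (show (0:ℝ) ≤ 1/P by positivity)
      have h10 : 1/P * (P * τ (s / H ^ m)) = τ (s / H ^ m) := hfrac _
      have h11 : 1/P * (τ s + (P - 1) * H) = τ s / P + (1 - 1/P) * H := by field_simp
      have h13 : (1 - 1/P) * H ≤ H := by
        have h14 : 0 < 1/P := by positivity
        nlinarith
      rw [h10, h11] at h9
      linarith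
    have h15 : τ s / P ≤ c/2 * τ s := by
      calc τ s / P = 1/P * τ s := by ring
        _ ≤ c/2 * τ s := mul_le_mul_of_nonneg_right hinvP (hτ.nonneg s)
    have h16 : K ≤ c/2 * τ s := by
      have h17 : K = c/2 * (2/c * K) := by field_simp
      rw [h17]
      exact mul_le_mul_of_nonneg_left h3s (by positivity)
    rw [hKdef] at h16
    linarith

end Aux7
theorem stmt14 (σ τ : ℝ → ℝ) (hσ : IsW0 σ) (hτ : IsW0 τ) :
    ((σ =o[atTop] τ) ↔
      (∃ ℓ₀ : ℝ, 0 < ℓ₀ ∧ ∃ j₀ : ℝ, 0 < j₀ ∧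
        omegaSeq (assocSeq σ j₀) =o[atTop] omegaSeq (assocSeq τ ℓ₀))) ∧
    ((σ =o[atTop] τ) ↔
      (∀ ℓ : ℝ, 0 < ℓ → ∀ j : ℝ, 0 < j →
        omegaSeq (assocSeq σ j) =o[atTop] omegaSeq (assocSeq τ ℓ))) ∧
    ((∀ ℓ : ℝ, 0 < ℓ → ∀ j : ℝ, 0 < j → seqTriangle (assocSeq τ j) (assocSeq σ ℓ)) →
      (σ =o[atTop] τ) ∧
      (∃ ℓ₀ : ℝ, 0 < ℓ₀ ∧ ∃ j₀ : ℝ, 0 < j₀ ∧ seqTriangle (assocSeq τ j₀) (assocSeq σ ℓ₀))) ∧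
    ((HasOm1 σ ∨ HasOm1 τ) →
      ((σ =o[atTop] τ) → UpperConjWD σ τ) ∧
      ((∃ ℓ₀ : ℝ, 0 < ℓ₀ ∧ ∃ j₀ : ℝ, 0 < j₀ ∧
          omegaSeq (assocSeq σ j₀) =o[atTop] omegaSeq (assocSeq τ ℓ₀)) →
        (∃ ℓ₀ : ℝ, 0 < ℓ₀ ∧ ∃ j₀ : ℝ, 0 < j₀ ∧ seqTriangle (assocSeq τ j₀) (assocSeq σ ℓ₀))) ∧
      ((∀ ℓ : ℝ, 0 < ℓ → ∀ j : ℝ, 0 < j →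
          omegaSeq (assocSeq σ j) =o[atTop] omegaSeq (assocSeq τ ℓ)) →
        (∀ ℓ : ℝ, 0 < ℓ → ∀ j : ℝ, 0 < j → seqTriangle (assocSeq τ j) (assocSeq σ ℓ)))) ∧
    ((HasOm6 σ ∨ HasOm6 τ) →
      ((∀ ℓ : ℝ, 0 < ℓ → ∀ j : ℝ, 0 < j → seqTriangle (assocSeq τ j) (assocSeq σ ℓ)) →
        (∀ ℓ : ℝ, 0 < ℓ → ∀ j : ℝ, 0 < j →
          omegaSeq (assocSeq σ j) =o[atTop] omegaSeq (assocSeq τ ℓ))) ∧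
      ((∃ ℓ₀ : ℝ, 0 < ℓ₀ ∧ ∃ j₀ : ℝ, 0 < j₀ ∧ seqTriangle (assocSeq τ j₀) (assocSeq σ ℓ₀)) →
        (∃ ℓ₀ : ℝ, 0 < ℓ₀ ∧ ∃ j₀ : ℝ, 0 < j₀ ∧
          omegaSeq (assocSeq σ j₀) =o[atTop] omegaSeq (assocSeq τ ℓ₀))) ∧
      (UpperConjWD σ τ → (σ =o[atTop] τ))) ∧
    ((HasOm1 σ ∨ HasOm1 τ) → (HasOm6 σ ∨ HasOm6 τ) →
      ((σ =o[atTop] τ) ↔ UpperConjWD σ τ) ∧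
      ((σ =o[atTop] τ) ↔
        (∃ ℓ₀ : ℝ, 0 < ℓ₀ ∧ ∃ j₀ : ℝ, 0 < j₀ ∧ seqTriangle (assocSeq τ j₀) (assocSeq σ ℓ₀))) ∧
      ((σ =o[atTop] τ) ↔
        (∀ ℓ : ℝ, 0 < ℓ → ∀ j : ℝ, 0 < j → seqTriangle (assocSeq τ j) (assocSeq σ ℓ)))) := by
  have hii_i : (∃ ℓ₀ : ℝ, 0 < ℓ₀ ∧ ∃ j₀ : ℝ, 0 < j₀ ∧
      omegaSeq (assocSeq σ j₀) =o[atTop] omegaSeq (assocSeq τ ℓ₀)) → σ =o[atTop] τ := by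
    rintro ⟨ℓ₀, hℓ₀, j₀, hj₀, ho⟩
    exact lem_ii_to_i hσ hτ hℓ₀ hj₀ ho
  have hi_iii : (σ =o[atTop] τ) → ∀ ℓ : ℝ, 0 < ℓ → ∀ j : ℝ, 0 < j →
      omegaSeq (assocSeq σ j) =o[atTop] omegaSeq (assocSeq τ ℓ) :=
    fun ho ℓ hℓ j hj => lem_i_to_iii hσ hτ ho hℓ hj
  have hi_ii : (σ =o[atTop] τ) → (∃ ℓ₀ : ℝ, 0 < ℓ₀ ∧ ∃ j₀ : ℝ, 0 < j₀ ∧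
      omegaSeq (assocSeq σ j₀) =o[atTop] omegaSeq (assocSeq τ ℓ₀)) :=
    fun ho => ⟨1, one_pos, 1, one_pos, hi_iii ho 1 one_pos 1 one_pos⟩
  refine ⟨⟨hi_ii, hii_i⟩,
    ⟨hi_iii, fun h => hii_i ⟨1, one_pos, 1, one_pos, h 1 one_pos 1 one_pos⟩⟩,
    fun hvi => ⟨lem_vi_to_i hσ hτ hvi, ⟨1, one_pos, 1, one_pos, hvi 1 one_pos 1 one_pos⟩⟩,
    fun h1 => ⟨fun ho => lem_i_om1_to_iv hσ hτ h1 ho,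
      fun hii => ⟨1, one_pos, 1, one_pos,
        lem_i_om1_to_vi hσ hτ h1 (hii_i hii) one_pos one_pos⟩,
      fun hiii ℓ hℓ j hj => lem_i_om1_to_vi hσ hτ h1
        (hii_i ⟨1, one_pos, 1, one_pos, hiii 1 one_pos 1 one_pos⟩) hℓ hj⟩,
    fun h6 => ⟨fun hvi ℓ hℓ j hj => lem_i_to_iii hσ hτ (lem_vi_to_i hσ hτ hvi) hℓ hj, ?_,
      fun hiv => lem_iv_om6_to_i hσ hτ h6 hiv⟩,
    fun h1 h6 => ⟨⟨fun ho => lem_i_om1_to_iv hσ hτ h1 ho, fun hiv => lem_iv_om6_to_i hσ hτ h6 hiv⟩,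
      ⟨fun ho => ⟨1, one_pos, 1, one_pos, lem_i_om1_to_vi hσ hτ h1 ho one_pos one_pos⟩, ?_⟩,
      ⟨fun ho ℓ hℓ j hj => lem_i_om1_to_vi hσ hτ h1 ho hℓ hj, lem_vi_to_i hσ hτ⟩⟩⟩
  · rintro ⟨ℓ₀, hℓ₀, j₀, hj₀, hst⟩
    exact ⟨1, one_pos, 1, one_pos,
      lem_i_to_iii hσ hτ (lem_v_om6_to_i hσ hτ h6 hℓ₀ hj₀ hst) one_pos one_pos⟩
  · rintro ⟨ℓ₀, hℓ₀, j₀, hj₀, hst⟩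
    exact lem_v_om6_to_i hσ hτ h6 hℓ₀ hj₀ hst
end
end

section
/- Let σ be a weight function in the class W₀ with associated weight matrix {S^(ℓ) : ℓ > 0} and let α > 0. The following are equivalent: (i) σ(t) = o(t^{1/α}) as t → +∞; (ii) σ(t) = o(ω_{G^α}(t)) as t → +∞; (iii) ω_{S^(j)}(t) = o(ω_{G^α}(t)) as t → +∞ for some (equivalently, for every) j > 0; (iv) σ⋆̂id^{1/α} is well-defined; (v) σ⋆̂ω_{G^α} is well-defined; (vi) ω_{S^(ℓ)}⋆̂ω_{G^α} is well-defined for some (equivalently, for every) ℓ > 0; (vii) G^α ◁ S^(ℓ) for some (equivalently, for every) ℓ > 0. -/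
open Real Filter Asymptotics Set
open scoped ENNReal Topology

noncomputable section

namespace S15

def pSet (σ : ℝ → ℝ) (x : ℝ) : Set ℝ := {z : ℝ | ∃ y : ℝ, 0 ≤ y ∧ z = x * y - σ (Real.exp y)}

lemma phiStar_eq (σ : ℝ → ℝ) (x : ℝ) : phiStar σ x = sSup (pSet σ x) := rfl

variable {σ : ℝ → ℝ}

lemma sig_one (hσ : IsW0 σ) : σ 1 = 0 := hσ.2.2.1 1 ⟨zero_le_one, le_refl 1⟩

lemma pSet_mem0 (hσ : IsW0 σ) (x : ℝ) : (0:ℝ) ∈ pSet σ x :=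
  ⟨0, le_refl 0, by simp [Real.exp_zero, sig_one hσ]⟩

lemma pSet_bdd (hσ : IsW0 σ) {x : ℝ} (hx : 0 ≤ x) : BddAbove (pSet σ x) := by
  have hlog := hσ.2.2.2.1
  rw [isLittleO_iff] at hlog
  have hc : (0:ℝ) < 1/(x+1) := by positivity
  obtain ⟨s₀, hs₀⟩ := (hlog hc).exists_forall_of_atTop
  set y₀ : ℝ := max 0 |s₀| with hy₀
  have hy₀0 : 0 ≤ y₀ := le_max_left _ _
  refine ⟨x * y₀, fun z hz => ?_⟩
  obtain ⟨y, hy, rfl⟩ := hz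
  by_cases hyy : y ≤ y₀
  · have : σ (Real.exp y) ≥ 0 := hσ.1.1 _
    nlinarith
  · push_neg at hyy
    have hey : s₀ ≤ Real.exp y := by
      have h1 : y + 1 ≤ Real.exp y := Real.add_one_le_exp y
      have : |s₀| ≤ y₀ := le_max_right _ _
      have : s₀ ≤ |s₀| := le_abs_self _
      linarith
    have := hs₀ _ hey
    rw [Real.norm_eq_abs, Real.norm_eq_abs, abs_of_nonneg (hσ.1.1 _)] at this
    have hlogy : Real.log (Real.exp y) = y := Real.log_exp y
    have habs : y ≤ |Real.log (Real.exp y)| := by rw [hlogy]; exact le_abs_self y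
    have hσy : (x+1) * y ≤ σ (Real.exp y) := by
      have h2 : y ≤ 1/(x+1) * σ (Real.exp y) := le_trans habs this
      have hx1 : (0:ℝ) < x + 1 := by linarith
      rw [div_mul_eq_mul_div, one_mul, le_div_iff₀ hx1] at h2
      linarith
    nlinarith

lemma young (hσ : IsW0 σ) {x y : ℝ} (hx : 0 ≤ x) (hy : 0 ≤ y) :
    x * y - σ (Real.exp y) ≤ phiStar σ x :=
  le_csSup (pSet_bdd hσ hx) ⟨y, hy, rfl⟩

lemma phiStar_nonneg (hσ : IsW0 σ) {x : ℝ} (hx : 0 ≤ x) : 0 ≤ phiStar σ x :=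
  le_csSup (pSet_bdd hσ hx) (pSet_mem0 hσ x)

lemma phiStar_zero (hσ : IsW0 σ) : phiStar σ 0 = 0 := by
  refine le_antisymm (csSup_le ⟨0, pSet_mem0 hσ 0⟩ ?_) (phiStar_nonneg hσ le_rfl)
  rintro z ⟨y, hy, rfl⟩
  have := hσ.1.1 (Real.exp y)
  linarith

lemma phiStar_mono (hσ : IsW0 σ) {x₁ x₂ : ℝ} (h1 : 0 ≤ x₁) (h12 : x₁ ≤ x₂) :
    phiStar σ x₁ ≤ phiStar σ x₂ := by
  refine csSup_le ⟨0, pSet_mem0 hσ x₁⟩ ?_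
  rintro z ⟨y, hy, rfl⟩
  calc x₁ * y - σ (Real.exp y) ≤ x₂ * y - σ (Real.exp y) := by nlinarith
    _ ≤ phiStar σ x₂ := young hσ (le_trans h1 h12) hy

def oSet (M : ℕ → ℝ) (t : ℝ) : Set ℝ := {z : ℝ | ∃ p : ℕ, z = Real.log (t ^ p / M p)}

lemma omegaSeq_eq (M : ℕ → ℝ) (t : ℝ) : omegaSeq M t = sSup (oSet M t) := rfl

lemma assocSeq_pos (σ : ℝ → ℝ) (ℓ : ℝ) (p : ℕ) : 0 < assocSeq σ ℓ p := Real.exp_pos _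

lemma assocSeq_zero (hσ : IsW0 σ) {ℓ : ℝ} : assocSeq σ ℓ 0 = 1 := by
  simp [assocSeq, phiStar_zero hσ]

lemma oSet_mem0_S (hσ : IsW0 σ) (ℓ t : ℝ) : (0:ℝ) ∈ oSet (assocSeq σ ℓ) t := by
  exact ⟨0, by simp [assocSeq_zero hσ]⟩

lemma elem_S_eq {ℓ : ℝ} (hℓ : 0 < ℓ) {t : ℝ} (ht : 0 < t) (p : ℕ) :
    Real.log (t ^ p / assocSeq σ ℓ p) = p * Real.log t - (1/ℓ) * phiStar σ (ℓ * p) := by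
  rw [Real.log_div (by positivity) (assocSeq_pos σ ℓ p).ne', Real.log_pow, assocSeq,
    Real.log_exp]

lemma elem_S_le (hσ : IsW0 σ) {ℓ : ℝ} (hℓ : 0 < ℓ) {t : ℝ} (ht : 0 ≤ t) :
    ∀ z ∈ oSet (assocSeq σ ℓ) t, z ≤ σ t / ℓ := by
  rintro z ⟨p, rfl⟩
  have hσt : 0 ≤ σ t / ℓ := div_nonneg (hσ.1.1 t) hℓ.le
  rcases eq_or_lt_of_le ht with h0 | h0
  · rw [← h0]
    rw [← h0] at hσt
    rcases Nat.eq_zero_or_pos p with rfl | hp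
    · simpa [assocSeq_zero hσ] using hσt
    · rw [zero_pow hp.ne', zero_div, Real.log_zero]; exact hσt
  rw [elem_S_eq hℓ h0]
  have hps : 0 ≤ (1/ℓ) * phiStar σ (ℓ * p) := by
    have := phiStar_nonneg hσ (x := ℓ * p) (by positivity)
    positivity
  by_cases ht1 : t ≤ 1
  · have hlt : Real.log t ≤ 0 := Real.log_nonpos h0.le ht1
    nlinarith [Nat.cast_nonneg (α := ℝ) p]
  · push_neg at ht1
    have hy : (0:ℝ) ≤ Real.log t := Real.log_nonneg ht1.le
    have hYoung : ℓ * p * Real.log t - σ (Real.exp (Real.log t)) ≤ phiStar σ (ℓ * p) :=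
      young hσ (by positivity) hy
    rw [Real.exp_log h0] at hYoung
    have : (1/ℓ) * (ℓ * p * Real.log t - σ t) ≤ (1/ℓ) * phiStar σ (ℓ * p) := by
      apply mul_le_mul_of_nonneg_left hYoung (by positivity)
    have hl : (1/ℓ) * (ℓ * p * Real.log t) = p * Real.log t := by
      field_simp
    rw [mul_sub, hl, mul_comm (1/ℓ) (σ t), ← div_eq_mul_one_div] at this
    linarith [this]

lemma oSet_S_bdd (hσ : IsW0 σ) {ℓ : ℝ} (hℓ : 0 < ℓ) {t : ℝ} (ht : 0 ≤ t) :
    BddAbove (oSet (assocSeq σ ℓ) t) := ⟨σ t / ℓ, fun _ hz => elem_S_le hσ hℓ ht _ hz⟩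

lemma omegaS_le (hσ : IsW0 σ) {ℓ : ℝ} (hℓ : 0 < ℓ) {t : ℝ} (ht : 0 ≤ t) :
    omegaSeq (assocSeq σ ℓ) t ≤ σ t / ℓ :=
  csSup_le ⟨0, oSet_mem0_S hσ ℓ t⟩ (elem_S_le hσ hℓ ht)

lemma omegaS_nonneg (hσ : IsW0 σ) {ℓ : ℝ} (hℓ : 0 < ℓ) {t : ℝ} (ht : 0 ≤ t) :
    0 ≤ omegaSeq (assocSeq σ ℓ) t :=
  le_csSup (oSet_S_bdd hσ hℓ ht) (oSet_mem0_S hσ ℓ t)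

lemma gevrey_pos (α : ℝ) (p : ℕ) : 0 < gevrey α p :=
  Real.rpow_pos_of_pos (by exact_mod_cast p.factorial_pos) α

lemma gevrey_zero (α : ℝ) : gevrey α 0 = 1 := by simp [gevrey]

lemma log_gevrey (α : ℝ) (p : ℕ) : Real.log (gevrey α p) = α * Real.log (p.factorial) := by
  rw [gevrey, Real.log_rpow (by exact_mod_cast p.factorial_pos)]

lemma oSet_mem0_G (α : ℝ) (t : ℝ) : (0:ℝ) ∈ oSet (gevrey α) t :=
  ⟨0, by simp [gevrey_zero]⟩

lemma elem_G_eq (α : ℝ) {t : ℝ} (ht : 0 < t) (p : ℕ) :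
    Real.log (t ^ p / gevrey α p) = p * Real.log t - α * Real.log (p.factorial) := by
  rw [Real.log_div (by positivity) (gevrey_pos α p).ne', Real.log_pow, log_gevrey]

lemma pow_self_le_exp_mul_factorial (p : ℕ) : (p:ℝ) ^ p ≤ Real.exp p * p.factorial := by
  have h := Real.sum_le_exp_of_nonneg (x := (p:ℝ)) (by positivity) (p+1)
  have hterm : (p:ℝ) ^ p / p.factorial ≤ ∑ i ∈ Finset.range (p+1), (p:ℝ) ^ i / i.factorial := by
    refine Finset.single_le_sum (f := fun i => (p:ℝ) ^ i / i.factorial) ?_ ?_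
    · intro i _; positivity
    · exact Finset.self_mem_range_succ p
  have hfac : (0:ℝ) < p.factorial := by exact_mod_cast p.factorial_pos
  rw [div_le_iff₀ hfac] at hterm
  calc ((p:ℝ))^p ≤ (∑ i ∈ Finset.range (p+1), (p:ℝ) ^ i / i.factorial) * p.factorial := hterm
    _ ≤ Real.exp p * p.factorial := by apply mul_le_mul_of_nonneg_right h hfac.le

lemma log_fact_ge (p : ℕ) : (p:ℝ) * Real.log p - p ≤ Real.log p.factorial := by
  have h := pow_self_le_exp_mul_factorial p
  have hfac : (0:ℝ) < p.factorial := by exact_mod_cast p.factorial_pos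
  rcases Nat.eq_zero_or_pos p with rfl | hp
  · simp
  · have hp0 : (0:ℝ) < p := by exact_mod_cast hp
    have := Real.log_le_log (by positivity) h
    rw [Real.log_pow, Real.log_mul (Real.exp_pos _).ne' hfac.ne', Real.log_exp] at this
    linarith

lemma log_fact_le (p : ℕ) : Real.log p.factorial ≤ (p:ℝ) * Real.log p := by
  have h : (p.factorial : ℝ) ≤ (p:ℝ) ^ p := by exact_mod_cast p.factorial_le_pow
  have hfac : (0:ℝ) < p.factorial := by exact_mod_cast p.factorial_pos
  have := Real.log_le_log hfac h
  rwa [Real.log_pow] at this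

lemma gevrey_elem_le {α : ℝ} (hα : 0 < α) {t : ℝ} (ht : 0 ≤ t) (p : ℕ) :
    Real.log (t ^ p / gevrey α p) ≤ α * t ^ (1/α) := by
  have hrpow : (0:ℝ) ≤ α * t ^ (1/α) := by positivity
  rcases eq_or_lt_of_le ht with h0 | h0
  · rw [← h0] at hrpow ⊢
    rcases Nat.eq_zero_or_pos p with rfl | hp
    · simpa [gevrey_zero] using hrpow
    · rw [zero_pow hp.ne', zero_div, Real.log_zero]; exact hrpow
  rw [elem_G_eq α h0]
  have hlf : (0:ℝ) ≤ Real.log p.factorial :=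
    Real.log_nonneg (by exact_mod_cast p.factorial_pos)
  by_cases ht1 : t ≤ 1
  · have hlt : Real.log t ≤ 0 := Real.log_nonpos h0.le ht1
    nlinarith [Nat.cast_nonneg (α := ℝ) p]
  · push_neg at ht1
    have hy : (0:ℝ) ≤ Real.log t := Real.log_nonneg ht1.le
    set c : ℝ := t ^ (1/α) with hc
    have hcpos : 0 < c := Real.rpow_pos_of_pos h0 _
    have hlogc : Real.log c = (1/α) * Real.log t := Real.log_rpow h0 _
    rcases Nat.eq_zero_or_pos p with rfl | hp
    · simpa using hrpow
    have hp0 : (0:ℝ) < p := by exact_mod_cast hp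
    have h1 : (p:ℝ) * Real.log t - α * Real.log p.factorial ≤
        (p:ℝ) * Real.log t - α * ((p:ℝ) * Real.log p - p) := by
      nlinarith [log_fact_ge p]
    have hkey : (p:ℝ) * (Real.log (c / p) + 1) ≤ c := by
      have := Real.log_le_sub_one_of_pos (x := c / p) (by positivity)
      have h2 : (p:ℝ) * (Real.log (c/p) + 1) ≤ (p:ℝ) * (c/p) := by nlinarith
      calc (p:ℝ) * (Real.log (c/p) + 1) ≤ (p:ℝ) * (c/p) := h2
        _ = c := by field_simp
    have hlogdiv : Real.log (c / p) = Real.log c - Real.log p :=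
      Real.log_div hcpos.ne' hp0.ne'
    have hlt : Real.log t = α * Real.log c := by
      rw [hlogc]; field_simp
    calc (p:ℝ) * Real.log t - α * Real.log p.factorial
        ≤ (p:ℝ) * Real.log t - α * ((p:ℝ) * Real.log p - p) := h1
      _ = α * ((p:ℝ) * (Real.log (c/p) + 1)) := by rw [hlt, hlogdiv]; ring
      _ ≤ α * c := by nlinarith

lemma oSet_G_bdd {α : ℝ} (hα : 0 < α) {t : ℝ} (ht : 0 ≤ t) :
    BddAbove (oSet (gevrey α) t) := by
  refine ⟨α * t ^ (1/α), ?_⟩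
  rintro z ⟨p, rfl⟩
  exact gevrey_elem_le hα ht p

lemma omegaG_le {α : ℝ} (hα : 0 < α) {t : ℝ} (ht : 0 ≤ t) :
    omegaSeq (gevrey α) t ≤ α * t ^ (1/α) :=
  csSup_le ⟨0, oSet_mem0_G α t⟩ (fun _ ⟨p, hp⟩ => hp ▸ gevrey_elem_le hα ht p)

lemma omegaG_nonneg {α : ℝ} (hα : 0 < α) {t : ℝ} (ht : 0 ≤ t) :
    0 ≤ omegaSeq (gevrey α) t :=
  le_csSup (oSet_G_bdd hα ht) (oSet_mem0_G α t)

lemma omegaG_ge {α : ℝ} (hα : 0 < α) {t : ℝ} (ht : 0 ≤ t) :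
    α / Real.exp 1 * t ^ (1/α) - α ≤ omegaSeq (gevrey α) t := by
  set c : ℝ := t ^ (1/α) with hc
  have hcnn : 0 ≤ c := Real.rpow_nonneg ht _
  have he : (0:ℝ) < Real.exp 1 := Real.exp_pos 1
  by_cases hce : c < Real.exp 1
  · have : α / Real.exp 1 * c - α ≤ 0 := by
      rw [sub_nonpos, div_mul_eq_mul_div, div_le_iff₀ he]
      nlinarith
    linarith [omegaG_nonneg hα ht]
  · push_neg at hce
    have hcpos : 0 < c := lt_of_lt_of_le he hce
    have ht0 : 0 < t := by
      rcases eq_or_lt_of_le ht with h | h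
      · exfalso
        rw [← h, Real.zero_rpow (by positivity)] at hc
        rw [hc] at hcpos
        exact lt_irrefl 0 hcpos
      · exact h
    have hlogc : Real.log c = (1/α) * Real.log t := Real.log_rpow ht0 _
    set p : ℕ := ⌊c / Real.exp 1⌋₊ with hp
    have hce1 : (1:ℝ) ≤ c / Real.exp 1 := (one_le_div he).mpr hce
    have hp1 : 1 ≤ p := Nat.one_le_iff_ne_zero.mpr (by
      simp only [hp, ne_eq, Nat.floor_eq_zero, not_lt]
      exact_mod_cast hce1)
    have hple : (p:ℝ) ≤ c / Real.exp 1 := Nat.floor_le (by positivity)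
    have hpgt : c / Real.exp 1 - 1 < p := by
      have := Nat.lt_floor_add_one (c / Real.exp 1)
      linarith
    have hp0 : (0:ℝ) < p := by exact_mod_cast hp1
    have hlogp : Real.log p ≤ Real.log c - 1 := by
      have h1 : Real.log p ≤ Real.log (c / Real.exp 1) := Real.log_le_log hp0 hple
      rwa [Real.log_div hcpos.ne' he.ne', Real.log_exp] at h1
    have hlt : Real.log t = α * Real.log c := by rw [hlogc]; field_simp
    have helem : (p:ℝ) * Real.log t - α * Real.log p.factorial ≥ α * p := by
      have h1 : Real.log p.factorial ≤ (p:ℝ) * Real.log p := log_fact_le p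
      have h2 : (p:ℝ) * Real.log p ≤ (p:ℝ) * (Real.log c - 1) := by nlinarith
      nlinarith
    have hmem : (p:ℝ) * Real.log t - α * Real.log p.factorial ∈ oSet (gevrey α) t :=
      ⟨p, (elem_G_eq α ht0 p).symm⟩
    have hle := le_csSup (oSet_G_bdd hα ht) hmem
    have hfin : α / Real.exp 1 * c - α ≤ α * p := by
      rw [div_mul_eq_mul_div]
      have : α * c / Real.exp 1 = α * (c / Real.exp 1) := by ring
      rw [this]
      nlinarith
    rw [omegaSeq_eq]
    linarith

lemma dual (hσ : IsW0 σ) {ℓ : ℝ} (hℓ : 0 < ℓ) {t : ℝ} (ht : 1 ≤ t) :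
    σ t ≤ ℓ * omegaSeq (assocSeq σ ℓ) t + ℓ * Real.log t := by
  have ht0 : 0 < t := lt_of_lt_of_le one_pos ht
  have hy₀ : 0 ≤ Real.log t := Real.log_nonneg ht
  have hexpy₀ : Real.exp (Real.log t) = t := Real.exp_log ht0
  refine le_of_forall_pos_le_add fun ε hε => ?_
  -- find h > 0 with σ(exp(log t + h)) ≤ σ t + ε
  have hcσ : ContinuousAt σ t := hσ.2.1.continuousAt (Ici_mem_nhds ht0)
  have hφc : ContinuousAt (fun y => σ (Real.exp y)) (Real.log t) := by
    apply ContinuousAt.comp (x := Real.log t) (g := σ)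
    · rw [hexpy₀]; exact hcσ
    · exact Real.continuous_exp.continuousAt
  have hev : ∀ᶠ y in 𝓝 (Real.log t), σ (Real.exp y) < σ t + ε := by
    have : (fun y => σ (Real.exp y)) (Real.log t) < σ t + ε := by
      simp only []
      rw [hexpy₀]; linarith
    exact hφc.eventually_lt continuousAt_const this
  rw [Metric.eventually_nhds_iff] at hev
  obtain ⟨δ, hδ0, hδ⟩ := hev
  set h : ℝ := δ / 2 with hhdef
  have hh0 : 0 < h := by positivity
  have hh : σ (Real.exp (Real.log t + h)) ≤ σ t + ε := by
    refine (hδ ?_).le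
    rw [Real.dist_eq]
    rw [abs_of_nonneg (by linarith)]
    simp only [add_sub_cancel_left]
    rw [hhdef]; linarith
  -- the supporting slope
  set y₀ : ℝ := Real.log t with hy₀def
  have hmono := hσ.1.2.1
  have hφy₀ : σ (Real.exp y₀) = σ t := by rw [hexpy₀]
  have hφmono : σ t ≤ σ (Real.exp (y₀ + h)) := by
    rw [← hexpy₀]
    exact hmono (Real.exp_nonneg _) (Real.exp_nonneg _) (Real.exp_le_exp.mpr (by linarith))
  set x₀ : ℝ := (σ (Real.exp (y₀ + h)) - σ t) / h with hx₀def
  have hx₀ : 0 ≤ x₀ := div_nonneg (by linarith) hh0.le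
  have hx₀h : x₀ * h = σ (Real.exp (y₀ + h)) - σ t := div_mul_cancel₀ _ hh0.ne'
  have hconv := hσ.2.2.2.2
  -- the key pointwise estimate
  have hC : ∀ y : ℝ, 0 ≤ y → x₀ * y - σ (Real.exp y) ≤ x₀ * y₀ - σ t + ε := by
    intro y hy
    rcases lt_trichotomy y y₀ with hlt | heq | hgt
    · have hs := hconv.slope_mono_adjacent (mem_univ y) (mem_univ (y₀ + h)) hlt
        (by linarith : y₀ < y₀ + h)
      have hd : y₀ + h - y₀ = h := by ring
      rw [hd] at hs
      have hy₀y : 0 < y₀ - y := by linarith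
      rw [div_le_div_iff₀ hy₀y hh0] at hs
      -- (σ(e^y₀) − σ(e^y)) * h ≤ (σ(e^{y₀+h}) − σ(e^y₀)) * (y₀ − y)
      rw [hφy₀] at hs
      have : σ t - σ (Real.exp y) ≤ x₀ * (y₀ - y) := by
        rw [hx₀def]
        rw [div_mul_eq_mul_div, le_div_iff₀ hh0]
        linarith
      nlinarith
    · rw [heq, hφy₀]; linarith
    · by_cases hyh : y ≤ y₀ + h
      · have h1 : σ (Real.exp y₀) ≤ σ (Real.exp y) :=
          hmono (Real.exp_nonneg _) (Real.exp_nonneg _) (Real.exp_le_exp.mpr hgt.le)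
        rw [hφy₀] at h1
        have h2 : x₀ * (y - y₀) ≤ x₀ * h := by
          apply mul_le_mul_of_nonneg_left (by linarith) hx₀
        have h3 : x₀ * h ≤ ε := by rw [hx₀h]; linarith
        nlinarith
      · push_neg at hyh
        have hs := hconv.slope_mono_adjacent (mem_univ y₀) (mem_univ y)
          (by linarith : y₀ < y₀ + h) hyh
        have hd : y₀ + h - y₀ = h := by ring
        rw [hd, hφy₀] at hs
        have hyd : 0 < y - (y₀ + h) := by linarith
        rw [div_le_div_iff₀ hh0 hyd] at hs
        -- (σ(e^{y₀+h}) − σ t) * (y − y₀ − h) ≤ (σ(e^y) − σ(e^{y₀+h})) * h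
        have h4 : x₀ * (y - y₀) ≤ σ (Real.exp y) - σ t := by
          have h5 : x₀ * (y - (y₀ + h)) ≤ σ (Real.exp y) - σ (Real.exp (y₀ + h)) := by
            rw [hx₀def, div_mul_eq_mul_div, div_le_iff₀ hh0]
            nlinarith
          nlinarith [hx₀h]
        linarith
  have hstar : phiStar σ x₀ ≤ x₀ * y₀ - σ t + ε := by
    refine csSup_le ⟨0, pSet_mem0 hσ x₀⟩ ?_
    rintro z ⟨y, hy, rfl⟩
    exact hC y hy
  -- discretize
  set p : ℕ := ⌊x₀ / ℓ⌋₊ with hpdef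
  have hp1 : (p:ℝ) ≤ x₀ / ℓ := Nat.floor_le (div_nonneg hx₀ hℓ.le)
  have hp2 : x₀ / ℓ < (p:ℝ) + 1 := Nat.lt_floor_add_one _
  have hℓp : ℓ * p ≤ x₀ := by
    rw [mul_comm]
    exact (le_div_iff₀ hℓ).mp hp1
  have hx₀le : x₀ ≤ ℓ * ((p:ℝ) + 1) := by
    rw [mul_comm]
    exact ((div_lt_iff₀ hℓ).mp hp2).le
  have hmstar : phiStar σ (ℓ * p) ≤ phiStar σ x₀ := phiStar_mono hσ (by positivity) hℓp
  have hmem : (p:ℝ) * y₀ - (1/ℓ) * phiStar σ (ℓ * p) ∈ oSet (assocSeq σ ℓ) t :=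
    ⟨p, (elem_S_eq hℓ ht0 p).symm⟩
  have hzp : (p:ℝ) * y₀ - (1/ℓ) * phiStar σ (ℓ * p) ≤ omegaSeq (assocSeq σ ℓ) t :=
    le_csSup (oSet_S_bdd hσ hℓ ht0.le) hmem
  have hstp : 0 ≤ phiStar σ (ℓ * p) := phiStar_nonneg hσ (by positivity)
  have hchain : σ t ≤ ℓ * ((p:ℝ) + 1) * y₀ - phiStar σ (ℓ * p) + ε := by
    have h1 : x₀ * y₀ ≤ ℓ * ((p:ℝ) + 1) * y₀ := mul_le_mul_of_nonneg_right hx₀le hy₀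
    linarith
  have hfin : ℓ * ((p:ℝ) + 1) * y₀ - phiStar σ (ℓ * p) =
      ℓ * ((p:ℝ) * y₀ - (1/ℓ) * phiStar σ (ℓ * p)) + ℓ * y₀ := by
    field_simp
    ring
  rw [hfin] at hchain
  have h2 : ℓ * ((p:ℝ) * y₀ - (1/ℓ) * phiStar σ (ℓ * p)) ≤ ℓ * omegaSeq (assocSeq σ ℓ) t :=
    mul_le_mul_of_nonneg_left hzp hℓ.le
  rw [hy₀def] at hchain
  linarith

lemma T1 {α : ℝ} (hα : 0 < α) {f : ℝ → ℝ}
    (hf : f =o[atTop] fun t : ℝ => t ^ (1/α)) :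
    f =o[atTop] omegaSeq (gevrey α) := by
  rw [isLittleO_iff] at hf ⊢
  intro c hc
  have he : (0:ℝ) < Real.exp 1 := Real.exp_pos 1
  have hc' : (0:ℝ) < c * α / (2 * Real.exp 1) := by positivity
  have h1 := hf hc'
  have h2 : ∀ᶠ t : ℝ in atTop, (2 * Real.exp 1) ≤ t ^ (1/α) :=
    (tendsto_rpow_atTop (by positivity)).eventually_ge_atTop _
  filter_upwards [h1, h2, eventually_ge_atTop (0:ℝ)] with t hf1 ht2 ht0
  have hωge := omegaG_ge hα ht0
  have hrnn : (0:ℝ) ≤ t ^ (1/α) := Real.rpow_nonneg ht0 _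
  have hωhalf : α / (2 * Real.exp 1) * t ^ (1/α) ≤ omegaSeq (gevrey α) t := by
    have : α / (2 * Real.exp 1) * t ^ (1/α) ≤ α / Real.exp 1 * t ^ (1/α) - α := by
      have key : α / (2 * Real.exp 1) * (2 * Real.exp 1) ≤
          α / (2 * Real.exp 1) * t ^ (1/α) := by
        apply mul_le_mul_of_nonneg_left ht2 (by positivity)
      have h9 : α / (2 * Real.exp 1) * (2 * Real.exp 1) = α := by field_simp
      have hid : α / Real.exp 1 * t ^ (1/α) = 2 * (α / (2 * Real.exp 1) * t ^ (1/α)) := by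
        field_simp
      linarith
    linarith
  have hωnn : 0 ≤ omegaSeq (gevrey α) t := omegaG_nonneg hα ht0
  have hωn : ‖omegaSeq (gevrey α) t‖ = omegaSeq (gevrey α) t := by
    rw [Real.norm_eq_abs, abs_of_nonneg hωnn]
  rw [hωn]
  calc ‖f t‖ ≤ c * α / (2 * Real.exp 1) * ‖t ^ (1/α)‖ := hf1
    _ = c * (α / (2 * Real.exp 1) * t ^ (1/α)) := by
        rw [Real.norm_eq_abs, abs_of_nonneg hrnn]; ring
    _ ≤ c * omegaSeq (gevrey α) t := by
        apply mul_le_mul_of_nonneg_left hωhalf hc.le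

lemma T2 {α : ℝ} (hα : 0 < α) {f : ℝ → ℝ}
    (hf : f =o[atTop] omegaSeq (gevrey α)) :
    f =o[atTop] fun t : ℝ => t ^ (1/α) := by
  rw [isLittleO_iff] at hf ⊢
  intro c hc
  have hc' : (0:ℝ) < c / α := by positivity
  filter_upwards [hf hc', eventually_ge_atTop (0:ℝ)] with t hf1 ht0
  have hωnn : 0 ≤ omegaSeq (gevrey α) t := omegaG_nonneg hα ht0
  have hrnn : (0:ℝ) ≤ t ^ (1/α) := Real.rpow_nonneg ht0 _
  rw [Real.norm_eq_abs (omegaSeq _ _), abs_of_nonneg hωnn] at hf1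
  calc ‖f t‖ ≤ c / α * omegaSeq (gevrey α) t := hf1
    _ ≤ c / α * (α * t ^ (1/α)) := by
        apply mul_le_mul_of_nonneg_left (omegaG_le hα ht0) hc'.le
    _ = c * t ^ (1/α) := by field_simp
    _ = c * ‖t ^ (1/α)‖ := by rw [Real.norm_eq_abs, abs_of_nonneg hrnn]

lemma globalBound (hσ : IsW0 σ) {α : ℝ} (hα : 0 < α)
    (h1 : σ =o[atTop] fun t : ℝ => t ^ (1/α)) {ε : ℝ} (hε : 0 < ε) :
    ∃ C : ℝ, 0 ≤ C ∧ ∀ s : ℝ, 0 ≤ s → σ s ≤ ε * s ^ (1/α) + C := by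
  rw [isLittleO_iff] at h1
  obtain ⟨s₀, hs₀⟩ := (h1 hε).exists_forall_of_atTop
  set s₁ : ℝ := max s₀ 0 with hs₁def
  refine ⟨σ s₁, hσ.1.1 s₁, fun s hs => ?_⟩
  by_cases hss : s₁ ≤ s
  · have := hs₀ s (le_trans (le_max_left _ _) hss)
    rw [Real.norm_eq_abs, Real.norm_eq_abs, abs_of_nonneg (hσ.1.1 s),
      abs_of_nonneg (Real.rpow_nonneg hs _)] at this
    have : σ s ≤ ε * s ^ (1/α) := this
    linarith [hσ.1.1 s₁]
  · push_neg at hss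
    have h2 : σ s ≤ σ s₁ := hσ.1.2.1 hs (le_max_right s₀ 0) hss.le
    have h3 : 0 ≤ ε * s ^ (1/α) := by positivity
    linarith

lemma littleo_of_forall (hσ : IsW0 σ) {α : ℝ} (hα : 0 < α)
    (H : ∀ c : ℝ, 0 < c → ∃ C k : ℝ, ∀ s : ℝ, 1 ≤ s → σ s ≤ c * s ^ (1/α) + C + k * Real.log s) :
    σ =o[atTop] fun t : ℝ => t ^ (1/α) := by
  rw [isLittleO_iff]
  intro c hc
  obtain ⟨C, k, hCk⟩ := H (c/2) (by positivity)
  have hlog : (fun s : ℝ => Real.log s) =o[atTop] fun s : ℝ => s ^ (1/α) :=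
    isLittleO_log_rpow_atTop (by positivity)
  rw [isLittleO_iff] at hlog
  have hc4 : (0:ℝ) < c / (4 * (|C| + |k| + 1)) := by positivity
  have hconst : ∀ᶠ s : ℝ in atTop, C ≤ c/4 * s ^ (1/α) := by
    have h2 : ∀ᶠ s : ℝ in atTop, 4 * |C| / c ≤ s ^ (1/α) :=
      (tendsto_rpow_atTop (by positivity)).eventually_ge_atTop _
    filter_upwards [h2] with s hs
    have : 4 * |C| / c * (c/4) ≤ s ^ (1/α) * (c/4) :=
      mul_le_mul_of_nonneg_right hs (by positivity)
    have he : 4 * |C| / c * (c/4) = |C| := by field_simp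
    have : |C| ≤ s ^ (1/α) * (c / 4) := by linarith
    calc C ≤ |C| := le_abs_self C
      _ ≤ c/4 * s ^ (1/α) := by linarith
  have hlogev : ∀ᶠ s : ℝ in atTop, k * Real.log s ≤ c/4 * s ^ (1/α) := by
    have h3 := hlog hc4
    filter_upwards [h3, eventually_ge_atTop (1:ℝ)] with s hs hs1
    have hl0 : 0 ≤ Real.log s := Real.log_nonneg hs1
    have hr0 : (0:ℝ) ≤ s ^ (1/α) := Real.rpow_nonneg (by linarith) _
    rw [Real.norm_eq_abs, Real.norm_eq_abs, abs_of_nonneg hl0, abs_of_nonneg hr0] at hs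
    have h4 : k * Real.log s ≤ |k| * Real.log s := by
      apply mul_le_mul_of_nonneg_right (le_abs_self k) hl0
    have h5 : |k| * Real.log s ≤ |k| * (c / (4 * (|C| + |k| + 1)) * s ^ (1/α)) :=
      mul_le_mul_of_nonneg_left hs (abs_nonneg k)
    have h6 : |k| * (c / (4 * (|C| + |k| + 1)) * s ^ (1/α)) ≤ c/4 * s ^ (1/α) := by
      rw [← mul_assoc]
      apply mul_le_mul_of_nonneg_right _ hr0
      have hD : (0:ℝ) < |C| + |k| + 1 := by positivity
      have h7 : |k| * (c / (4 * (|C| + |k| + 1))) = c/4 * (|k| / (|C|+|k|+1)) := by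
        field_simp
      rw [h7]
      have h8 : |k| / (|C|+|k|+1) ≤ 1 := by
        rw [div_le_one hD]
        nlinarith [abs_nonneg C]
      nlinarith [hc.le]
    linarith
  filter_upwards [hconst, hlogev, eventually_ge_atTop (1:ℝ)] with s h1 h2 hs1
  have hs0 : (0:ℝ) ≤ s := by linarith
  have hr0 : (0:ℝ) ≤ s ^ (1/α) := Real.rpow_nonneg hs0 _
  rw [Real.norm_eq_abs, Real.norm_eq_abs, abs_of_nonneg (hσ.1.1 s), abs_of_nonneg hr0]
  have := hCk s hs1
  linarith

lemma wd_i_iv (hσ : IsW0 σ) {α : ℝ} (hα : 0 < α)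
    (h1 : σ =o[atTop] fun t : ℝ => t ^ (1/α)) :
    UpperConjWD σ (fun u : ℝ => u ^ (1/α)) := by
  intro t ht
  have ha : 0 < t ^ (1/α) := Real.rpow_pos_of_pos ht _
  obtain ⟨C, hC0, hC⟩ := globalBound hσ hα h1 (ε := 1 / t ^ (1/α)) (by positivity)
  refine ⟨C, ?_⟩
  rintro z ⟨s, hs, rfl⟩
  have hdiv : (s/t) ^ (1/α) = s ^ (1/α) / t ^ (1/α) := Real.div_rpow hs ht.le (1/α)
  have h2 := hC s hs
  have h3 : 1 / t ^ (1/α) * s ^ (1/α) = s ^ (1/α) / t ^ (1/α) := by ring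
  simp only [hdiv]
  linarith

lemma wd_iv_i (hσ : IsW0 σ) {α : ℝ} (hα : 0 < α)
    (h : UpperConjWD σ (fun u : ℝ => u ^ (1/α))) :
    σ =o[atTop] fun t : ℝ => t ^ (1/α) := by
  apply littleo_of_forall hσ hα
  intro c hc
  have h2c : (0:ℝ) < 2/c := by positivity
  set t : ℝ := (2/c) ^ α with htdef
  have ht : 0 < t := Real.rpow_pos_of_pos h2c _
  obtain ⟨C, hC⟩ := h t ht
  refine ⟨C, 0, fun s hs => ?_⟩
  have hs0 : (0:ℝ) ≤ s := by linarith
  have hzle : σ s - (s/t) ^ (1/α) ≤ C := hC ⟨s, hs0, rfl⟩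
  have hta : t ^ (1/α) = 2/c := by
    rw [htdef, ← Real.rpow_mul h2c.le, mul_one_div_cancel hα.ne', Real.rpow_one]
  have hdiv : (s/t) ^ (1/α) = s ^ (1/α) / t ^ (1/α) := Real.div_rpow hs0 ht.le (1/α)
  rw [hdiv, hta] at hzle
  have hrnn : (0:ℝ) ≤ s ^ (1/α) := Real.rpow_nonneg hs0 _
  have he : s ^ (1/α) / (2/c) = c/2 * s ^ (1/α) := by field_simp
  rw [he] at hzle
  simp only [zero_mul, add_zero]
  nlinarith

lemma wd_i_v (hσ : IsW0 σ) {α : ℝ} (hα : 0 < α)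
    (h1 : σ =o[atTop] fun t : ℝ => t ^ (1/α)) :
    UpperConjWD σ (omegaSeq (gevrey α)) := by
  intro t ht
  have ha : 0 < t ^ (1/α) := Real.rpow_pos_of_pos ht _
  have he : (0:ℝ) < Real.exp 1 := Real.exp_pos 1
  obtain ⟨C, hC0, hC⟩ := globalBound hσ hα h1
    (ε := α / (Real.exp 1 * t ^ (1/α))) (by positivity)
  refine ⟨C + α, ?_⟩
  rintro z ⟨s, hs, rfl⟩
  have hst : (0:ℝ) ≤ s / t := by positivity
  have hG := omegaG_ge hα hst
  have hdiv : (s/t) ^ (1/α) = s ^ (1/α) / t ^ (1/α) := Real.div_rpow hs ht.le (1/α)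
  rw [hdiv] at hG
  have h2 := hC s hs
  have h3 : α / (Real.exp 1 * t ^ (1/α)) * s ^ (1/α) =
      α / Real.exp 1 * (s ^ (1/α) / t ^ (1/α)) := by field_simp
  linarith

lemma wd_v_i (hσ : IsW0 σ) {α : ℝ} (hα : 0 < α)
    (h : UpperConjWD σ (omegaSeq (gevrey α))) :
    σ =o[atTop] fun t : ℝ => t ^ (1/α) := by
  apply littleo_of_forall hσ hα
  intro c hc
  have h2c : (0:ℝ) < 2*α/c := by positivity
  set t : ℝ := (2*α/c) ^ α with htdef
  have ht : 0 < t := Real.rpow_pos_of_pos h2c _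
  obtain ⟨C, hC⟩ := h t ht
  refine ⟨C, 0, fun s hs => ?_⟩
  have hs0 : (0:ℝ) ≤ s := by linarith
  have hzle : σ s - omegaSeq (gevrey α) (s/t) ≤ C := hC ⟨s, hs0, rfl⟩
  have hst : (0:ℝ) ≤ s / t := by positivity
  have hGle := omegaG_le hα hst
  have hta : t ^ (1/α) = 2*α/c := by
    rw [htdef, ← Real.rpow_mul h2c.le, mul_one_div_cancel hα.ne', Real.rpow_one]
  have hdiv : (s/t) ^ (1/α) = s ^ (1/α) / t ^ (1/α) := Real.div_rpow hs0 ht.le (1/α)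
  rw [hdiv, hta] at hGle
  have hrnn : (0:ℝ) ≤ s ^ (1/α) := Real.rpow_nonneg hs0 _
  have he : α * (s ^ (1/α) / (2*α/c)) = c/2 * s ^ (1/α) := by field_simp
  rw [he] at hGle
  simp only [zero_mul, add_zero]
  nlinarith

lemma wd_i_vi (hσ : IsW0 σ) {α : ℝ} (hα : 0 < α) {ℓ : ℝ} (hℓ : 0 < ℓ)
    (h1 : σ =o[atTop] fun t : ℝ => t ^ (1/α)) :
    UpperConjWD (omegaSeq (assocSeq σ ℓ)) (omegaSeq (gevrey α)) := by
  intro t ht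
  have ha : 0 < t ^ (1/α) := Real.rpow_pos_of_pos ht _
  have he : (0:ℝ) < Real.exp 1 := Real.exp_pos 1
  obtain ⟨C, hC0, hC⟩ := globalBound hσ hα h1
    (ε := ℓ * α / (Real.exp 1 * t ^ (1/α))) (by positivity)
  refine ⟨C/ℓ + α, ?_⟩
  rintro z ⟨s, hs, rfl⟩
  have hst : (0:ℝ) ≤ s / t := by positivity
  have hG := omegaG_ge hα hst
  have hdiv : (s/t) ^ (1/α) = s ^ (1/α) / t ^ (1/α) := Real.div_rpow hs ht.le (1/α)
  rw [hdiv] at hG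
  have h2 := hC s hs
  have h3 : omegaSeq (assocSeq σ ℓ) s ≤ σ s / ℓ := omegaS_le hσ hℓ hs
  have h4 : σ s / ℓ ≤ (α / (Real.exp 1 * t ^ (1/α))) * s ^ (1/α) + C/ℓ := by
    rw [div_le_iff₀ hℓ]
    have h5 : ((α / (Real.exp 1 * t ^ (1/α))) * s ^ (1/α) + C/ℓ) * ℓ =
        ℓ * α / (Real.exp 1 * t ^ (1/α)) * s ^ (1/α) + C := by field_simp
    rw [h5]
    exact h2
  have h6 : α / (Real.exp 1 * t ^ (1/α)) * s ^ (1/α) =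
      α / Real.exp 1 * (s ^ (1/α) / t ^ (1/α)) := by field_simp
  linarith

lemma wd_vi_i (hσ : IsW0 σ) {α : ℝ} (hα : 0 < α) {ℓ : ℝ} (hℓ : 0 < ℓ)
    (h : UpperConjWD (omegaSeq (assocSeq σ ℓ)) (omegaSeq (gevrey α))) :
    σ =o[atTop] fun t : ℝ => t ^ (1/α) := by
  apply littleo_of_forall hσ hα
  intro c hc
  have h2c : (0:ℝ) < 2*ℓ*α/c := by positivity
  set t : ℝ := (2*ℓ*α/c) ^ α with htdef
  have ht : 0 < t := Real.rpow_pos_of_pos h2c _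
  obtain ⟨C, hC⟩ := h t ht
  refine ⟨ℓ * C, ℓ, fun s hs => ?_⟩
  have hs0 : (0:ℝ) ≤ s := by linarith
  have hzle : omegaSeq (assocSeq σ ℓ) s - omegaSeq (gevrey α) (s/t) ≤ C := hC ⟨s, hs0, rfl⟩
  have hst : (0:ℝ) ≤ s / t := by positivity
  have hGle := omegaG_le hα hst
  have hta : t ^ (1/α) = 2*ℓ*α/c := by
    rw [htdef, ← Real.rpow_mul h2c.le, mul_one_div_cancel hα.ne', Real.rpow_one]
  have hdiv : (s/t) ^ (1/α) = s ^ (1/α) / t ^ (1/α) := Real.div_rpow hs0 ht.le (1/α)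
  rw [hdiv, hta] at hGle
  have hrnn : (0:ℝ) ≤ s ^ (1/α) := Real.rpow_nonneg hs0 _
  have hdual := dual hσ hℓ hs
  have he : ℓ * (α * (s ^ (1/α) / (2*ℓ*α/c))) = c/2 * s ^ (1/α) := by field_simp
  -- σ s ≤ ℓ * ω_S s + ℓ log s ≤ ℓ (ω_G(s/t) + C) + ℓ log s
  have h7 : ℓ * omegaSeq (assocSeq σ ℓ) s ≤ ℓ * (omegaSeq (gevrey α) (s/t) + C) :=
    mul_le_mul_of_nonneg_left (by linarith) hℓ.le
  have h8 : ℓ * (omegaSeq (gevrey α) (s/t) + C) ≤ ℓ * (α * (s ^ (1/α) / (2*ℓ*α/c))) + ℓ * C := by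
    nlinarith
  nlinarith

lemma iii_of_i (hσ : IsW0 σ) {α : ℝ} (hα : 0 < α) {j : ℝ} (hj : 0 < j)
    (h1 : σ =o[atTop] fun t : ℝ => t ^ (1/α)) :
    omegaSeq (assocSeq σ j) =o[atTop] omegaSeq (gevrey α) := by
  have hσG : σ =o[atTop] omegaSeq (gevrey α) := T1 hα h1
  rw [isLittleO_iff] at hσG ⊢
  intro c hc
  filter_upwards [hσG (show (0:ℝ) < c*j by positivity), eventually_ge_atTop (0:ℝ)]
    with t h2 ht0
  have h3 : omegaSeq (assocSeq σ j) t ≤ σ t / j := omegaS_le hσ hj ht0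
  have hnn : 0 ≤ omegaSeq (assocSeq σ j) t := omegaS_nonneg hσ hj ht0
  rw [Real.norm_eq_abs, abs_of_nonneg hnn]
  rw [Real.norm_eq_abs, abs_of_nonneg (hσ.1.1 t)] at h2
  have h4 : σ t / j ≤ c * ‖omegaSeq (gevrey α) t‖ := by
    rw [div_le_iff₀ hj]
    calc σ t ≤ c * j * ‖omegaSeq (gevrey α) t‖ := h2
      _ = c * ‖omegaSeq (gevrey α) t‖ * j := by ring
  linarith

lemma i_of_iii (hσ : IsW0 σ) {α : ℝ} (hα : 0 < α) {j : ℝ} (hj : 0 < j)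
    (h : omegaSeq (assocSeq σ j) =o[atTop] omegaSeq (gevrey α)) :
    σ =o[atTop] fun t : ℝ => t ^ (1/α) := by
  apply T2 hα
  have hlogG : (fun t : ℝ => Real.log t) =o[atTop] omegaSeq (gevrey α) :=
    T1 hα (isLittleO_log_rpow_atTop (by positivity))
  rw [isLittleO_iff] at h hlogG ⊢
  intro c hc
  have hc2 : (0:ℝ) < c / (2*j) := by positivity
  filter_upwards [h hc2, hlogG hc2, eventually_ge_atTop (1:ℝ)] with t h2 h3 ht1
  have ht0 : (0:ℝ) ≤ t := by linarith
  rw [Real.norm_eq_abs (σ t), abs_of_nonneg (hσ.1.1 t)]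
  have hdual := dual hσ hj ht1
  have h4 : omegaSeq (assocSeq σ j) t ≤ ‖omegaSeq (assocSeq σ j) t‖ := le_abs_self _
  have h5 : Real.log t ≤ ‖Real.log t‖ := le_abs_self _
  have h6 : j * omegaSeq (assocSeq σ j) t ≤ j * (c/(2*j) * ‖omegaSeq (gevrey α) t‖) :=
    mul_le_mul_of_nonneg_left (le_trans h4 h2) hj.le
  have h7 : j * Real.log t ≤ j * (c/(2*j) * ‖omegaSeq (gevrey α) t‖) :=
    mul_le_mul_of_nonneg_left (le_trans h5 h3) hj.le
  have h8 : j * (c/(2*j) * ‖omegaSeq (gevrey α) t‖) = c/2 * ‖omegaSeq (gevrey α) t‖ := by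
    field_simp
  rw [h8] at h6 h7
  linarith

set_option maxHeartbeats 1000000 in
lemma vii_of_i (hσ : IsW0 σ) {α : ℝ} (hα : 0 < α) {ℓ : ℝ} (hℓ : 0 < ℓ)
    (h1 : σ =o[atTop] fun t : ℝ => t ^ (1/α)) :
    seqTriangle (gevrey α) (assocSeq σ ℓ) := by
  have hlogB : Tendsto (fun p : ℕ =>
      Real.log (gevrey α p / assocSeq σ ℓ p) * (1/(p:ℝ))) atTop atBot := by
    rw [tendsto_atBot]
    intro b
    set B : ℝ := Real.exp ((1 + |b|)/α) with hBdef
    have hB1 : (1:ℝ) ≤ B := Real.one_le_exp (by positivity)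
    have hB0 : (0:ℝ) < B := by linarith
    have hlogBv : α * Real.log B = 1 + |b| := by
      rw [hBdef, Real.log_exp]
      field_simp
    obtain ⟨C, hC0, hC⟩ := globalBound hσ hα h1 (ε := ℓ/(2*B)) (by positivity)
    have hcast : Tendsto (fun p : ℕ => (p:ℝ)) atTop atTop := tendsto_natCast_atTop_atTop
    filter_upwards [eventually_ge_atTop 1, hcast.eventually_ge_atTop (2*C/ℓ)] with p hp1 hCp
    have hp0 : (0:ℝ) < p := by exact_mod_cast hp1
    have hBp : (0:ℝ) < B * p := by positivity
    have hpc1 : (1:ℝ) ≤ (p:ℝ) := by exact_mod_cast hp1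
    have hBp1 : (1:ℝ) ≤ B * p := by nlinarith
    set y : ℝ := α * Real.log (B * p) with hydef
    have hy : 0 ≤ y := by
      have := Real.log_nonneg hBp1
      positivity
    have hexpy : Real.exp y = (B * (p:ℝ)) ^ α := by
      rw [Real.rpow_def_of_pos hBp, hydef, mul_comm]
    have hyoung := young hσ (show (0:ℝ) ≤ ℓ * p by positivity) hy
    have hσval : σ ((B * (p:ℝ)) ^ α) ≤ ℓ/(2*B) * (B * p) + C := by
      have h2 := hC ((B * (p:ℝ)) ^ α) (Real.rpow_nonneg hBp.le α)
      have h3 : ((B * (p:ℝ)) ^ α) ^ (1/α) = B * p := by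
        rw [← Real.rpow_mul hBp.le, mul_one_div_cancel hα.ne', Real.rpow_one]
      rwa [h3] at h2
    rw [hexpy] at hyoung
    -- φ*(ℓp) ≥ ℓp y - (ℓ/(2B) Bp + C)
    have hps : ℓ * p * y - (ℓ/(2*B) * (B*p) + C) ≤ phiStar σ (ℓ * p) := by linarith
    have hsimp : ℓ/(2*B) * (B*(p:ℝ)) = ℓ * p / 2 := by field_simp
    rw [hsimp] at hps
    have hlogfact : Real.log (p.factorial) ≤ (p:ℝ) * Real.log p := log_fact_le p
    have hlogval : Real.log (gevrey α p / assocSeq σ ℓ p) =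
        α * Real.log (p.factorial) - (1/ℓ) * phiStar σ (ℓ * p) := by
      rw [Real.log_div (gevrey_pos α p).ne' (assocSeq_pos σ ℓ p).ne', log_gevrey,
        assocSeq, Real.log_exp]
    have hlogBp : Real.log (B * (p:ℝ)) = Real.log B + Real.log p :=
      Real.log_mul hB0.ne' hp0.ne'
    have hmain : Real.log (gevrey α p / assocSeq σ ℓ p) ≤
        -(1 + |b|) * p + p/2 + C/ℓ := by
      rw [hlogval]
      have h4 : (1/ℓ) * (ℓ * p * y - ℓ * p / 2 - C) ≤ (1/ℓ) * phiStar σ (ℓ * p) := by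
        apply mul_le_mul_of_nonneg_left (by linarith) (by positivity)
      have h5 : (1/ℓ) * (ℓ * p * y - ℓ * p / 2 - C) = (p:ℝ) * y - p/2 - C/ℓ := by
        field_simp
      rw [h5] at h4
      have h6 : (p:ℝ) * y = α * ((p:ℝ) * Real.log p) + (1 + |b|) * p := by
        rw [hydef, hlogBp]
        have : α * Real.log B = 1 + |b| := hlogBv
        nlinarith [this]
      have h7 : α * Real.log (p.factorial) ≤ α * ((p:ℝ) * Real.log p) := by
        apply mul_le_mul_of_nonneg_left hlogfact hα.le
      nlinarith
    have hq : Real.log (gevrey α p / assocSeq σ ℓ p) * (1/(p:ℝ)) ≤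
        (-(1 + |b|) * p + p/2 + C/ℓ) * (1/(p:ℝ)) :=
      mul_le_mul_of_nonneg_right hmain (by positivity)
    have hexp : (-(1 + |b|) * (p:ℝ) + (p:ℝ)/2 + C/ℓ) * (1/(p:ℝ)) =
        -(1 + |b|) + 1/2 + (C/ℓ) * (1/(p:ℝ)) := by
      field_simp
    have h9 : (C/ℓ) * (1/(p:ℝ)) ≤ 1/2 := by
      have h10 : C/ℓ ≤ (p:ℝ)/2 := by
        rw [div_le_iff₀ hℓ] at hCp ⊢
        · linarith [hCp]
      calc (C/ℓ) * (1/(p:ℝ)) ≤ ((p:ℝ)/2) * (1/(p:ℝ)) :=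
            mul_le_mul_of_nonneg_right h10 (by positivity)
        _ = 1/2 := by field_simp
    rw [hexp] at hq
    have := neg_abs_le b
    linarith
  have hev : ∀ᶠ p : ℕ in atTop,
      Real.exp (Real.log (gevrey α p / assocSeq σ ℓ p) * (1/(p:ℝ))) =
      (gevrey α p / assocSeq σ ℓ p) ^ (1/(p:ℝ)) := by
    filter_upwards [eventually_ge_atTop 1] with p hp
    rw [Real.rpow_def_of_pos (div_pos (gevrey_pos α p) (assocSeq_pos σ ℓ p))]
  exact (Real.tendsto_exp_atBot.comp hlogB).congr' hev

set_option maxHeartbeats 1000000 in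
lemma i_of_vii (hσ : IsW0 σ) {α : ℝ} (hα : 0 < α) {ℓ : ℝ} (hℓ : 0 < ℓ)
    (h : seqTriangle (gevrey α) (assocSeq σ ℓ)) :
    σ =o[atTop] fun t : ℝ => t ^ (1/α) := by
  apply littleo_of_forall hσ hα
  intro c hc
  have h2c : (0:ℝ) < c/(2*ℓ*α) := by positivity
  set ε : ℝ := (c/(2*ℓ*α)) ^ α with hεdef
  have hε : 0 < ε := Real.rpow_pos_of_pos h2c _
  have hεa : ε ^ (1/α) = c/(2*ℓ*α) := by
    rw [hεdef, ← Real.rpow_mul h2c.le, mul_one_div_cancel hα.ne', Real.rpow_one]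
  have hev : ∀ᶠ p : ℕ in atTop, (gevrey α p / assocSeq σ ℓ p) ^ (1/(p:ℝ)) < ε :=
    h.eventually_lt_const hε
  obtain ⟨p₀, hp₀⟩ := hev.exists_forall_of_atTop
  -- for p ≥ p₀ : G_p / S_p ≤ ε^p
  have hGS : ∀ p : ℕ, p₀ ≤ p → 1 ≤ p → gevrey α p / assocSeq σ ℓ p ≤ ε ^ (p:ℕ) := by
    intro p hpp hp1
    have hr := (hp₀ p hpp).le
    have hpos : 0 < gevrey α p / assocSeq σ ℓ p := div_pos (gevrey_pos α p) (assocSeq_pos σ ℓ p)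
    have hp0 : (0:ℝ) < p := by exact_mod_cast hp1
    have h2 : ((gevrey α p / assocSeq σ ℓ p) ^ (1/(p:ℝ))) ^ (p:ℝ) ≤ ε ^ (p:ℝ) := by
      apply Real.rpow_le_rpow (Real.rpow_nonneg hpos.le _) hr (by positivity)
    rw [← Real.rpow_mul hpos.le, one_div, inv_mul_cancel₀ hp0.ne', Real.rpow_one] at h2
    rw [← Real.rpow_natCast ε p]
    exact h2
  refine ⟨0, ℓ * p₀ + ℓ, fun t ht1 => ?_⟩
  have ht0 : (0:ℝ) < t := lt_of_lt_of_le one_pos ht1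
  have hεt : (0:ℝ) ≤ ε * t := by positivity
  have hlt0 : 0 ≤ Real.log t := Real.log_nonneg ht1
  have hGnn : 0 ≤ omegaSeq (gevrey α) (ε*t) := omegaG_nonneg hα hεt
  have hωS : omegaSeq (assocSeq σ ℓ) t ≤ omegaSeq (gevrey α) (ε*t) + (p₀:ℝ) * Real.log t := by
    refine csSup_le ⟨0, oSet_mem0_S hσ ℓ t⟩ ?_
    rintro z ⟨p, rfl⟩
    by_cases hpp : p₀ ≤ p ∧ 1 ≤ p
    · obtain ⟨hpp, hp1⟩ := hpp
      have hGS' := hGS p hpp hp1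
      have hSpos := assocSeq_pos σ ℓ p
      have hGpos := gevrey_pos α p
      have hεp : (0:ℝ) < ε ^ p := by positivity
      have hS : gevrey α p / ε ^ p ≤ assocSeq σ ℓ p := by
        rw [div_le_iff₀ hεp]
        rw [div_le_iff₀ hSpos] at hGS'
        linarith
      have h3 : t^p / assocSeq σ ℓ p ≤ t^p / (gevrey α p / ε^p) :=
        div_le_div_of_nonneg_left (by positivity) (by positivity) hS
      have h4 : t^p / (gevrey α p / ε^p) = (ε*t)^p / gevrey α p := by
        rw [mul_pow]
        field_simp
      rw [h4] at h3
      have h5 : Real.log (t^p / assocSeq σ ℓ p) ≤ Real.log ((ε*t)^p / gevrey α p) :=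
        Real.log_le_log (by positivity) h3
      have h6 : Real.log ((ε*t)^p / gevrey α p) ≤ omegaSeq (gevrey α) (ε*t) :=
        le_csSup (oSet_G_bdd hα hεt) ⟨p, rfl⟩
      nlinarith [mul_nonneg (Nat.cast_nonneg p₀ : (0:ℝ) ≤ (p₀:ℝ)) hlt0]
    · have hple : (p:ℝ) ≤ (p₀:ℝ) := by
        rcases Nat.lt_or_ge p p₀ with hcase | hcase
        · exact_mod_cast hcase.le
        · have hp0 : p = 0 := by
            by_contra hne
            exact hpp ⟨hcase, Nat.one_le_iff_ne_zero.mpr hne⟩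
          rw [hp0]
          exact_mod_cast Nat.zero_le p₀
      rw [elem_S_eq hℓ ht0 p]
      have hps : 0 ≤ (1/ℓ) * phiStar σ (ℓ * p) := by
        have := phiStar_nonneg hσ (x := ℓ * p) (by positivity)
        positivity
      have h7 : (p:ℝ) * Real.log t ≤ (p₀:ℝ) * Real.log t :=
        mul_le_mul_of_nonneg_right hple hlt0
      linarith
  have hdual := dual hσ hℓ ht1
  have hGle : omegaSeq (gevrey α) (ε*t) ≤ α * (ε*t) ^ (1/α) := omegaG_le hα hεt
  have hmul : (ε*t) ^ (1/α) = ε ^ (1/α) * t ^ (1/α) := Real.mul_rpow hε.le ht0.le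
  rw [hmul, hεa] at hGle
  have hkey : ℓ * (α * (c/(2*ℓ*α) * t ^ (1/α))) = c/2 * t ^ (1/α) := by
    field_simp
  have hrnn : (0:ℝ) ≤ t ^ (1/α) := Real.rpow_nonneg ht0.le _
  have h8 : ℓ * omegaSeq (assocSeq σ ℓ) t ≤
      ℓ * (omegaSeq (gevrey α) (ε*t) + (p₀:ℝ) * Real.log t) :=
    mul_le_mul_of_nonneg_left hωS hℓ.le
  have h9 : ℓ * omegaSeq (gevrey α) (ε*t) ≤ c/2 * t ^ (1/α) := by
    calc ℓ * omegaSeq (gevrey α) (ε*t) ≤ ℓ * (α * (c/(2*ℓ*α) * t ^ (1/α))) :=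
          mul_le_mul_of_nonneg_left hGle hℓ.le
      _ = c/2 * t ^ (1/α) := hkey
  nlinarith

end S15

theorem stmt15 (σ : ℝ → ℝ) (hσ : IsW0 σ) (α : ℝ) (hα : 0 < α) :
    ((σ =o[atTop] fun t : ℝ => t ^ (1 / α)) ↔ (σ =o[atTop] omegaSeq (gevrey α))) ∧
    ((σ =o[atTop] fun t : ℝ => t ^ (1 / α)) ↔
      (∃ j : ℝ, 0 < j ∧ omegaSeq (assocSeq σ j) =o[atTop] omegaSeq (gevrey α))) ∧
    ((σ =o[atTop] fun t : ℝ => t ^ (1 / α)) ↔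
      (∀ j : ℝ, 0 < j → omegaSeq (assocSeq σ j) =o[atTop] omegaSeq (gevrey α))) ∧
    ((σ =o[atTop] fun t : ℝ => t ^ (1 / α)) ↔
      UpperConjWD σ (fun t : ℝ => t ^ (1 / α))) ∧
    ((σ =o[atTop] fun t : ℝ => t ^ (1 / α)) ↔
      UpperConjWD σ (omegaSeq (gevrey α))) ∧
    ((σ =o[atTop] fun t : ℝ => t ^ (1 / α)) ↔
      (∃ ℓ : ℝ, 0 < ℓ ∧ UpperConjWD (omegaSeq (assocSeq σ ℓ)) (omegaSeq (gevrey α)))) ∧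
    ((σ =o[atTop] fun t : ℝ => t ^ (1 / α)) ↔
      (∀ ℓ : ℝ, 0 < ℓ → UpperConjWD (omegaSeq (assocSeq σ ℓ)) (omegaSeq (gevrey α)))) ∧
    ((σ =o[atTop] fun t : ℝ => t ^ (1 / α)) ↔
      (∃ ℓ : ℝ, 0 < ℓ ∧ seqTriangle (gevrey α) (assocSeq σ ℓ))) ∧
    ((σ =o[atTop] fun t : ℝ => t ^ (1 / α)) ↔
      (∀ ℓ : ℝ, 0 < ℓ → seqTriangle (gevrey α) (assocSeq σ ℓ))) := by
  exact ⟨⟨fun h => S15.T1 hα h, fun h => S15.T2 hα h⟩,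
    ⟨fun h => ⟨1, one_pos, S15.iii_of_i hσ hα one_pos h⟩,
      fun ⟨j, hj, h⟩ => S15.i_of_iii hσ hα hj h⟩,
    ⟨fun h j hj => S15.iii_of_i hσ hα hj h,
      fun h => S15.i_of_iii hσ hα one_pos (h 1 one_pos)⟩,
    ⟨fun h => S15.wd_i_iv hσ hα h, fun h => S15.wd_iv_i hσ hα h⟩,
    ⟨fun h => S15.wd_i_v hσ hα h, fun h => S15.wd_v_i hσ hα h⟩,
    ⟨fun h => ⟨1, one_pos, S15.wd_i_vi hσ hα one_pos h⟩,
      fun ⟨l, hl, h⟩ => S15.wd_vi_i hσ hα hl h⟩,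
    ⟨fun h l hl => S15.wd_i_vi hσ hα hl h,
      fun h => S15.wd_vi_i hσ hα one_pos (h 1 one_pos)⟩,
    ⟨fun h => ⟨1, one_pos, S15.vii_of_i hσ hα one_pos h⟩,
      fun ⟨l, hl, h⟩ => S15.i_of_vii hσ hα hl h⟩,
    ⟨fun h l hl => S15.vii_of_i hσ hα hl h,
      fun h => S15.i_of_vii hσ hα one_pos (h 1 one_pos)⟩⟩
end
end
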